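/- arXiv:2602.04733 — 9 statements merged into one kernel-verified Lean document; each statement's English description precedes it below -/
import Mathlib

section
/- Let K = (-1,1) × (-1,1) be the open square in ℂ with boundary ∂K. For all x, y ∈ K, the infimum over z ∈ ∂K of |x−z| + |z−y| equals the minimum of the four quantities |x − conj(y) + 2i|, |x + conj(y) + 2|, |x − conj(y) − 2i|, |x + conj(y) − 2| (the distances from x to the reflections of y in the four lines containing the sides of the square). Consequently, for x ≠ y in K, s_K(x,y) = |x−y| / min{|x − conj(y) + 2i|, |x + conj(y) + 2|, |x − conj(y) − 2i|, |x + conj(y) − 2|}. -/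
open Complex Set Real

noncomputable section

/-- The constant `C = ∫₀¹ dt/√(1+t⁴)`. -/
def Csq : ℝ := ∫ t in (0:ℝ)..1, 1 / Real.sqrt (1 + t ^ 4)

/-- The conformal map `f(z) = C⁻¹ ∫₀^z dζ/√(1+ζ⁴)` of the unit disc onto the square
`(-1,1)²`, the integral taken along the segment from `0` to `z` and the square root
being the principal branch (complex power `1/2`). -/
def fSq (z : ℂ) : ℂ :=
  (Csq : ℂ)⁻¹ * ∫ t in (0:ℝ)..1, z / ((1 + ((t : ℂ) * z) ^ 4) ^ ((1 : ℂ)/2))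

/-- The open square `K = (-1,1) × (-1,1)` in `ℂ`. -/
def Ksq : Set ℂ := {z : ℂ | z.re ∈ Ioo (-1 : ℝ) 1 ∧ z.im ∈ Ioo (-1 : ℝ) 1}

/-- The boundary `∂K` of the closed square `[-1,1]²`. -/
def bdryK : Set ℂ := frontier {z : ℂ | z.re ∈ Icc (-1 : ℝ) 1 ∧ z.im ∈ Icc (-1 : ℝ) 1}

/-- The triangular ratio metric of the square `K`. -/
def sK (x y : ℂ) : ℝ := dist x y / sInf ((fun z => dist x z + dist z y) '' bdryK)

/-- `B(r) = ∫₀^r dt/√(1-t⁴)`. -/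
def Bint (r : ℝ) : ℝ := ∫ t in (0:ℝ)..r, 1 / Real.sqrt (1 - t ^ 4)

/-- `A(r) = √(1+r⁴) - 1`. -/
def Aint (r : ℝ) : ℝ := Real.sqrt (1 + r ^ 4) - 1

/-- Membership in the boundary of the square. -/
lemma mem_bdryK {z : ℂ} : z ∈ bdryK ↔
    (z.re ∈ Icc (-1:ℝ) 1 ∧ (z.im = -1 ∨ z.im = 1)) ∨
    ((z.re = -1 ∨ z.re = 1) ∧ z.im ∈ Icc (-1:ℝ) 1) := by
  have hset : {z : ℂ | z.re ∈ Icc (-1 : ℝ) 1 ∧ z.im ∈ Icc (-1 : ℝ) 1}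
      = (Icc (-1:ℝ) 1) ×ℂ (Icc (-1:ℝ) 1) := by
    ext w; simp [Complex.mem_reProdIm]
  have h1 : (-1:ℝ) < 1 := by norm_num
  rw [bdryK, hset, Complex.frontier_reProdIm, closure_Icc, frontier_Icc (le_of_lt h1)]
  simp only [mem_union, Complex.mem_reProdIm, mem_insert_iff, mem_singleton_iff]

/-- Reflection across a horizontal line preserves distance to points of the line. -/
lemma horiz_refl (c : ℝ) (z w : ℂ) (hz : z.im = c) :
    dist z w = dist z ((starRingEnd ℂ) w + 2*c*I) := by
  rw [Complex.dist_eq_re_im, Complex.dist_eq_re_im]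
  simp only [Complex.add_re, Complex.add_im, Complex.conj_re, Complex.conj_im,
    Complex.mul_re, Complex.mul_im, Complex.I_re, Complex.I_im, Complex.ofReal_re,
    Complex.ofReal_im, Complex.re_ofNat, Complex.im_ofNat, hz]
  congr 1
  ring

/-- Reflection across a vertical line preserves distance to points of the line. -/
lemma vert_refl (c : ℝ) (z w : ℂ) (hz : z.re = c) :
    dist z w = dist z (-(starRingEnd ℂ) w + 2*c) := by
  rw [Complex.dist_eq_re_im, Complex.dist_eq_re_im]
  simp only [Complex.add_re, Complex.add_im, Complex.neg_re, Complex.neg_im,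
    Complex.conj_re, Complex.conj_im, Complex.ofReal_re, Complex.ofReal_im,
    Complex.mul_re, Complex.mul_im, Complex.re_ofNat, Complex.im_ofNat, hz]
  congr 1
  ring

/-- A point on the segment from `x` to `w` splits the distance additively. -/
lemma seg_sum (x w : ℂ) (t : ℝ) (ht0 : 0 ≤ t) (ht1 : t ≤ 1) :
    dist x (x + (t:ℂ)*(w-x)) + dist (x + (t:ℂ)*(w-x)) w = dist x w := by
  have h1 : dist x (x + (t:ℂ)*(w-x)) = t * dist x w := by
    rw [dist_eq_norm, dist_eq_norm]
    have : x - (x + (t:ℂ)*(w-x)) = (t:ℂ) * (x - w) := by ring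
    rw [this, norm_mul, Complex.norm_real, Real.norm_eq_abs, _root_.abs_of_nonneg ht0]
  have h2 : dist (x + (t:ℂ)*(w-x)) w = (1-t) * dist x w := by
    rw [dist_eq_norm, dist_eq_norm]
    have : (x + (t:ℂ)*(w-x)) - w = ((1-t : ℝ):ℂ) * (x - w) := by push_cast; ring
    rw [this, norm_mul, Complex.norm_real, Real.norm_eq_abs,
      _root_.abs_of_nonneg (by linarith)]
  rw [h1, h2]; ring

lemma bddBelowS (x y : ℂ) : BddBelow ((fun z => dist x z + dist z y) '' bdryK) := by
  refine ⟨0, fun a ha => ?_⟩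
  obtain ⟨z, -, rfl⟩ := ha
  positivity

lemma sInf_le_horiz (x y : ℂ) (hx : x ∈ Ksq) (hy : y ∈ Ksq) (c : ℝ)
    (hc : c = -1 ∨ c = 1) :
    sInf ((fun z => dist x z + dist z y) '' bdryK) ≤
      dist x ((starRingEnd ℂ) y + 2*c*I) := by
  obtain ⟨⟨hx1, hx2⟩, hx3, hx4⟩ := hx
  obtain ⟨⟨hy1, hy2⟩, hy3, hy4⟩ := hy
  set w : ℂ := (starRingEnd ℂ) y + 2*c*I with hw
  have hwre : w.re = y.re := by simp [hw]
  have hwim : w.im = 2*c - y.im := by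
    simp [hw]; ring
  have hd : w.im - x.im ≠ 0 := by
    rcases hc with rfl | rfl <;> rw [hwim] <;> intro h <;> nlinarith
  have hex : ∃ t : ℝ, 0 ≤ t ∧ t ≤ 1 ∧ x.im + t*(w.im - x.im) = c := by
    refine ⟨(c - x.im)/(w.im - x.im), ?_, ?_, ?_⟩
    · rcases hc with rfl | rfl <;> rw [hwim]
      · apply div_nonneg_iff.mpr; right; constructor <;> nlinarith
      · apply div_nonneg <;> nlinarith
    · rcases hc with rfl | rfl <;> rw [hwim]
      · rw [div_le_one_iff]; right; right; constructor <;> nlinarith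
      · rw [div_le_one (by nlinarith)]; nlinarith
    · rw [div_mul_cancel₀ _ hd]; ring
  obtain ⟨t, ht0, ht1, htc⟩ := hex
  set z : ℂ := x + (t:ℂ)*(w-x) with hzdef
  have hzim : z.im = c := by
    have : z.im = x.im + t*(w.im - x.im) := by simp [hzdef]
    rw [this, htc]
  have hzre : z.re = x.re + t*(y.re - x.re) := by
    simp [hzdef, hwre]
  have hzmem : z ∈ bdryK := by
    rw [mem_bdryK]
    left
    constructor
    · rw [hzre]
      constructor <;> nlinarith
    · rcases hc with rfl | rfl
      · left; exact hzim
      · right; exact hzim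
  have key : dist x z + dist z y = dist x w := by
    have h1 : dist z y = dist z w := horiz_refl c z y hzim
    rw [h1, hzdef]
    exact seg_sum x w t ht0 ht1
  calc sInf ((fun z => dist x z + dist z y) '' bdryK) ≤ dist x z + dist z y :=
        csInf_le (bddBelowS x y) ⟨z, hzmem, rfl⟩
    _ = dist x w := key

lemma sInf_le_vert (x y : ℂ) (hx : x ∈ Ksq) (hy : y ∈ Ksq) (c : ℝ)
    (hc : c = -1 ∨ c = 1) :
    sInf ((fun z => dist x z + dist z y) '' bdryK) ≤
      dist x (-(starRingEnd ℂ) y + 2*c) := by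
  obtain ⟨⟨hx1, hx2⟩, hx3, hx4⟩ := hx
  obtain ⟨⟨hy1, hy2⟩, hy3, hy4⟩ := hy
  set w : ℂ := -(starRingEnd ℂ) y + 2*c with hw
  have hwre : w.re = 2*c - y.re := by simp [hw]; ring
  have hwim : w.im = y.im := by simp [hw]
  have hd : w.re - x.re ≠ 0 := by
    rcases hc with rfl | rfl <;> rw [hwre] <;> intro h <;> nlinarith
  have hex : ∃ t : ℝ, 0 ≤ t ∧ t ≤ 1 ∧ x.re + t*(w.re - x.re) = c := by
    refine ⟨(c - x.re)/(w.re - x.re), ?_, ?_, ?_⟩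
    · rcases hc with rfl | rfl <;> rw [hwre]
      · apply div_nonneg_iff.mpr; right; constructor <;> nlinarith
      · apply div_nonneg <;> nlinarith
    · rcases hc with rfl | rfl <;> rw [hwre]
      · rw [div_le_one_iff]; right; right; constructor <;> nlinarith
      · rw [div_le_one (by nlinarith)]; nlinarith
    · rw [div_mul_cancel₀ _ hd]; ring
  obtain ⟨t, ht0, ht1, htc⟩ := hex
  set z : ℂ := x + (t:ℂ)*(w-x) with hzdef
  have hzre : z.re = c := by
    have : z.re = x.re + t*(w.re - x.re) := by simp [hzdef]
    rw [this, htc]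
  have hzim : z.im = x.im + t*(y.im - x.im) := by
    simp [hzdef, hwim]
  have hzmem : z ∈ bdryK := by
    rw [mem_bdryK]
    right
    constructor
    · rcases hc with rfl | rfl
      · left; exact hzre
      · right; exact hzre
    · rw [hzim]
      constructor <;> nlinarith
  have key : dist x z + dist z y = dist x w := by
    have h1 : dist z y = dist z w := vert_refl c z y hzre
    rw [h1, hzdef]
    exact seg_sum x w t ht0 ht1
  calc sInf ((fun z => dist x z + dist z y) '' bdryK) ≤ dist x z + dist z y :=
        csInf_le (bddBelowS x y) ⟨z, hzmem, rfl⟩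
    _ = dist x w := key


lemma sInf_eq_min (x y : ℂ) (hx : x ∈ Ksq) (hy : y ∈ Ksq) :
    sInf ((fun z => dist x z + dist z y) '' bdryK) =
      min (min ‖x - (starRingEnd ℂ) y + 2 * I‖ ‖x + (starRingEnd ℂ) y + 2‖)
          (min ‖x - (starRingEnd ℂ) y - 2 * I‖ ‖x + (starRingEnd ℂ) y - 2‖) := by
  have e1 : ‖x - (starRingEnd ℂ) y + 2 * I‖ = dist x ((starRingEnd ℂ) y + 2*((-1:ℝ):ℂ)*I) := by
    rw [dist_eq_norm]; congr 1; push_cast; ring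
  have e2 : ‖x + (starRingEnd ℂ) y + 2‖ = dist x (-(starRingEnd ℂ) y + 2*((-1:ℝ):ℂ)) := by
    rw [dist_eq_norm]; congr 1; push_cast; ring
  have e3 : ‖x - (starRingEnd ℂ) y - 2 * I‖ = dist x ((starRingEnd ℂ) y + 2*((1:ℝ):ℂ)*I) := by
    rw [dist_eq_norm]; congr 1; push_cast; ring
  have e4 : ‖x + (starRingEnd ℂ) y - 2‖ = dist x (-(starRingEnd ℂ) y + 2*((1:ℝ):ℂ)) := by
    rw [dist_eq_norm]; congr 1; push_cast; ring
  apply le_antisymm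
  · refine le_min (le_min ?_ ?_) (le_min ?_ ?_)
    · rw [e1]; exact sInf_le_horiz x y hx hy (-1) (Or.inl rfl)
    · rw [e2]; exact sInf_le_vert x y hx hy (-1) (Or.inl rfl)
    · rw [e3]; exact sInf_le_horiz x y hx hy 1 (Or.inr rfl)
    · rw [e4]; exact sInf_le_vert x y hx hy 1 (Or.inr rfl)
  · apply le_csInf
    · refine ⟨dist x 1 + dist 1 y, 1, ?_, rfl⟩
      rw [mem_bdryK]
      right
      refine ⟨Or.inr (by simp), by simp⟩
    · rintro b ⟨z, hz, rfl⟩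
      rw [mem_bdryK] at hz
      rcases hz with ⟨-, hzim | hzim⟩ | ⟨hzre | hzre, -⟩
      · calc min (min ‖x - (starRingEnd ℂ) y + 2 * I‖ ‖x + (starRingEnd ℂ) y + 2‖)
              (min ‖x - (starRingEnd ℂ) y - 2 * I‖ ‖x + (starRingEnd ℂ) y - 2‖)
            ≤ ‖x - (starRingEnd ℂ) y + 2 * I‖ := le_trans (min_le_left _ _) (min_le_left _ _)
          _ ≤ dist x z + dist z y := by
              rw [e1, horiz_refl (-1) z y hzim]
              push_cast
              exact dist_triangle _ _ _
      · calc min (min ‖x - (starRingEnd ℂ) y + 2 * I‖ ‖x + (starRingEnd ℂ) y + 2‖)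
              (min ‖x - (starRingEnd ℂ) y - 2 * I‖ ‖x + (starRingEnd ℂ) y - 2‖)
            ≤ ‖x - (starRingEnd ℂ) y - 2 * I‖ := le_trans (min_le_right _ _) (min_le_left _ _)
          _ ≤ dist x z + dist z y := by
              rw [e3, horiz_refl 1 z y hzim]
              push_cast
              exact dist_triangle _ _ _
      · calc min (min ‖x - (starRingEnd ℂ) y + 2 * I‖ ‖x + (starRingEnd ℂ) y + 2‖)
              (min ‖x - (starRingEnd ℂ) y - 2 * I‖ ‖x + (starRingEnd ℂ) y - 2‖)
            ≤ ‖x + (starRingEnd ℂ) y + 2‖ := le_trans (min_le_left _ _) (min_le_right _ _)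
          _ ≤ dist x z + dist z y := by
              rw [e2, vert_refl (-1) z y hzre]
              push_cast
              exact dist_triangle _ _ _
      · calc min (min ‖x - (starRingEnd ℂ) y + 2 * I‖ ‖x + (starRingEnd ℂ) y + 2‖)
              (min ‖x - (starRingEnd ℂ) y - 2 * I‖ ‖x + (starRingEnd ℂ) y - 2‖)
            ≤ ‖x + (starRingEnd ℂ) y - 2‖ := le_trans (min_le_right _ _) (min_le_right _ _)
          _ ≤ dist x z + dist z y := by
              rw [e4, vert_refl 1 z y hzre]
              push_cast
              exact dist_triangle _ _ _

/-- For `x, y` in the open square `K`, the infimum over `z ∈ ∂K` of `|x-z|+|z-y|`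
equals the minimum of the distances from `x` to the four reflections of `y` in the
lines containing the sides; consequently `s_K` has the stated explicit form. -/
theorem stmt1 (x y : ℂ) (hx : x ∈ Ksq) (hy : y ∈ Ksq) :
    sInf ((fun z => dist x z + dist z y) '' bdryK) =
      min (min ‖x - (starRingEnd ℂ) y + 2 * I‖ ‖x + (starRingEnd ℂ) y + 2‖)
          (min ‖x - (starRingEnd ℂ) y - 2 * I‖ ‖x + (starRingEnd ℂ) y - 2‖) ∧
    (x ≠ y → sK x y = dist x y /
      min (min ‖x - (starRingEnd ℂ) y + 2 * I‖ ‖x + (starRingEnd ℂ) y + 2‖)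
          (min ‖x - (starRingEnd ℂ) y - 2 * I‖ ‖x + (starRingEnd ℂ) y - 2‖)) := by
  refine ⟨sInf_eq_min x y hx hy, fun _ => ?_⟩
  rw [sK, sInf_eq_min x y hx hy]
end
end

section
/- Let 0 < a < 1 and let u₁, u₂ ∈ [−a, a] satisfy |u₁ + u₂| ≤ a² + u₁u₂. Set w₁ = u₁ − i·a and w₂ = u₂ + i·a. Then s_K(w₁, w₂) = √(((u₁ − u₂)² + 4a²) / ((u₁ − u₂)² + 4)), and this quantity is at least a. -/
open Complex Set Real

noncomputable section

/-- The explicit value of the `s`-metric between `w₁ = u₁ - i·a` and `w₂ = u₂ + i·a`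
on opposite sides of the small square `[-a,a]²`, and the lower bound by `a`. -/
theorem stmt4 (a u₁ u₂ : ℝ) (ha : 0 < a) (ha1 : a < 1)
    (h₁ : u₁ ∈ Icc (-a) a) (h₂ : u₂ ∈ Icc (-a) a)
    (h : |u₁ + u₂| ≤ a ^ 2 + u₁ * u₂) :
    sK ((u₁ : ℂ) - a * I) ((u₂ : ℂ) + a * I) =
      Real.sqrt (((u₁ - u₂) ^ 2 + 4 * a ^ 2) / ((u₁ - u₂) ^ 2 + 4)) ∧
    a ≤ Real.sqrt (((u₁ - u₂) ^ 2 + 4 * a ^ 2) / ((u₁ - u₂) ^ 2 + 4)) := by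
  obtain ⟨h1l, h1r⟩ := h₁
  obtain ⟨h2l, h2r⟩ := h₂
  obtain ⟨hA1, hA2⟩ := abs_le.mp h
  have hR : 1 - a^2 ≤ (1-u₁)*(1-u₂) := by nlinarith
  have hL : 1 - a^2 ≤ (1+u₁)*(1+u₂) := by nlinarith
  set w₁ : ℂ := (u₁ : ℂ) - a * I with hw1
  set w₂ : ℂ := (u₂ : ℂ) + a * I with hw2
  set D : ℝ := Real.sqrt ((u₁ - u₂)^2 + 4) with hD
  have hw1re : w₁.re = u₁ := by simp [hw1]
  have hw1im : w₁.im = -a := by simp [hw1]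
  have hw2re : w₂.re = u₂ := by simp [hw2]
  have hw2im : w₂.im = a := by simp [hw2]
  have hbd : ∀ z : ℂ, z ∈ bdryK ↔
      (z.re ∈ Icc (-1:ℝ) 1 ∧ (z.im = -1 ∨ z.im = 1)) ∨
      ((z.re = -1 ∨ z.re = 1) ∧ z.im ∈ Icc (-1:ℝ) 1) := by
    intro z
    have hset : {z : ℂ | z.re ∈ Icc (-1 : ℝ) 1 ∧ z.im ∈ Icc (-1 : ℝ) 1}
        = Icc (-1:ℝ) 1 ×ℂ Icc (-1:ℝ) 1 := by
      ext w; simp [Complex.mem_reProdIm]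
    rw [bdryK, hset, Complex.frontier_reProdIm, closure_Icc,
      frontier_Icc (by norm_num : (-1:ℝ) ≤ 1)]
    simp [Complex.mem_reProdIm]
  -- lower bound
  have hlow : ∀ z ∈ bdryK, D ≤ dist w₁ z + dist z w₂ := by
    intro z hz
    rw [hbd z] at hz
    rcases hz with ⟨hre, him | him⟩ | ⟨hre | hre, him⟩
    · -- z.im = -1, reflect w₁ to w₁' = u₁ - (2-a) I
      have e1 : dist w₁ z = dist ((u₁:ℂ) - ((2-a:ℝ):ℂ)*I) z := by
        rw [Complex.dist_eq_re_im, Complex.dist_eq_re_im, hw1re, hw1im, him]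
        simp only [Complex.sub_re, Complex.sub_im, Complex.add_re, Complex.add_im, Complex.ofReal_re, Complex.ofReal_im, Complex.mul_re, Complex.mul_im, Complex.I_re, Complex.I_im]
        congr 1; ring
      have e2 : D = dist ((u₁:ℂ) - ((2-a:ℝ):ℂ)*I) w₂ := by
        rw [Complex.dist_eq_re_im, hw2re, hw2im, hD]
        simp only [Complex.sub_re, Complex.sub_im, Complex.add_re, Complex.add_im, Complex.ofReal_re, Complex.ofReal_im, Complex.mul_re, Complex.mul_im, Complex.I_re, Complex.I_im]
        congr 1; ring
      rw [e1, e2]; exact dist_triangle _ _ _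
    · -- z.im = 1, reflect w₂ to u₂ + (2-a) I
      have e1 : dist z w₂ = dist z ((u₂:ℂ) + ((2-a:ℝ):ℂ)*I) := by
        rw [Complex.dist_eq_re_im, Complex.dist_eq_re_im, hw2re, hw2im, him]
        simp only [Complex.sub_re, Complex.sub_im, Complex.add_re, Complex.add_im, Complex.ofReal_re, Complex.ofReal_im, Complex.mul_re, Complex.mul_im, Complex.I_re, Complex.I_im]
        congr 1; ring
      have e2 : D = dist w₁ ((u₂:ℂ) + ((2-a:ℝ):ℂ)*I) := by
        rw [Complex.dist_eq_re_im, hw1re, hw1im, hD]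
        simp only [Complex.sub_re, Complex.sub_im, Complex.add_re, Complex.add_im, Complex.ofReal_re, Complex.ofReal_im, Complex.mul_re, Complex.mul_im, Complex.I_re, Complex.I_im]
        congr 1; ring
      rw [e1, e2]; exact dist_triangle _ _ _
    · -- z.re = -1, reflect w₂ to -2-u₂ + a I
      have e1 : dist z w₂ = dist z ((-2-u₂:ℝ) + (a:ℂ)*I) := by
        rw [Complex.dist_eq_re_im, Complex.dist_eq_re_im, hw2re, hw2im, hre]
        simp only [Complex.sub_re, Complex.sub_im, Complex.add_re, Complex.add_im, Complex.ofReal_re, Complex.ofReal_im, Complex.mul_re, Complex.mul_im, Complex.I_re, Complex.I_im]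
        congr 1; ring
      have e2 : D ≤ dist w₁ ((-2-u₂:ℝ) + (a:ℂ)*I) := by
        rw [Complex.dist_eq_re_im, hw1re, hw1im, hD]
        simp only [Complex.sub_re, Complex.sub_im, Complex.add_re, Complex.add_im, Complex.ofReal_re, Complex.ofReal_im, Complex.mul_re, Complex.mul_im, Complex.I_re, Complex.I_im]
        apply Real.sqrt_le_sqrt
        nlinarith
      calc D ≤ dist w₁ ((-2-u₂:ℝ) + (a:ℂ)*I) := e2
        _ ≤ dist w₁ z + dist z ((-2-u₂:ℝ) + (a:ℂ)*I) := dist_triangle _ _ _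
        _ = dist w₁ z + dist z w₂ := by rw [e1]
    · -- z.re = 1, reflect w₂ to 2-u₂ + a I
      have e1 : dist z w₂ = dist z ((2-u₂:ℝ) + (a:ℂ)*I) := by
        rw [Complex.dist_eq_re_im, Complex.dist_eq_re_im, hw2re, hw2im, hre]
        simp only [Complex.sub_re, Complex.sub_im, Complex.add_re, Complex.add_im, Complex.ofReal_re, Complex.ofReal_im, Complex.mul_re, Complex.mul_im, Complex.I_re, Complex.I_im]
        congr 1; ring
      have e2 : D ≤ dist w₁ ((2-u₂:ℝ) + (a:ℂ)*I) := by
        rw [Complex.dist_eq_re_im, hw1re, hw1im, hD]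
        simp only [Complex.sub_re, Complex.sub_im, Complex.add_re, Complex.add_im, Complex.ofReal_re, Complex.ofReal_im, Complex.mul_re, Complex.mul_im, Complex.I_re, Complex.I_im]
        apply Real.sqrt_le_sqrt
        nlinarith
      calc D ≤ dist w₁ ((2-u₂:ℝ) + (a:ℂ)*I) := e2
        _ ≤ dist w₁ z + dist z ((2-u₂:ℝ) + (a:ℂ)*I) := dist_triangle _ _ _
        _ = dist w₁ z + dist z w₂ := by rw [e1]
  -- attained point
  set x₀ : ℝ := (u₁*(1-a)+u₂*(1+a))/2 with hx₀
  have hz₀mem : ((x₀:ℂ) + I) ∈ bdryK := by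
    rw [hbd]
    refine Or.inl ⟨⟨?_, ?_⟩, Or.inr (by simp)⟩ <;> simp <;> nlinarith
  have hval : dist w₁ ((x₀:ℂ) + I) + dist ((x₀:ℂ) + I) w₂ = D := by
    rw [Complex.dist_eq_re_im, Complex.dist_eq_re_im, hw1re, hw1im, hw2re, hw2im]
    have r1 : ((x₀:ℂ) + I).re = x₀ := by simp
    have r2 : ((x₀:ℂ) + I).im = 1 := by simp
    rw [r1, r2]
    have e1 : (u₁ - x₀)^2 + (-a - 1)^2 = ((1+a)/2)^2 * ((u₁-u₂)^2 + 4) := by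
      rw [hx₀]; ring
    have e2 : (x₀ - u₂)^2 + (1 - a)^2 = ((1-a)/2)^2 * ((u₁-u₂)^2 + 4) := by
      rw [hx₀]; ring
    rw [e1, e2, Real.sqrt_mul (sq_nonneg _), Real.sqrt_mul (sq_nonneg _),
      Real.sqrt_sq (by linarith : (0:ℝ) ≤ (1+a)/2),
      Real.sqrt_sq (by linarith : (0:ℝ) ≤ (1-a)/2), hD]
    ring
  have hSinf : sInf ((fun z => dist w₁ z + dist z w₂) '' bdryK) = D := by
    apply le_antisymm
    · apply csInf_le
      · refine ⟨0, ?_⟩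
        rintro s ⟨z, hz, rfl⟩
        positivity
      · exact ⟨_, hz₀mem, hval⟩
    · refine le_csInf ⟨_, ⟨_, hz₀mem, rfl⟩⟩ ?_
      rintro s ⟨z, hz, rfl⟩
      exact hlow z hz
  have hdist : dist w₁ w₂ = Real.sqrt ((u₁-u₂)^2 + 4*a^2) := by
    rw [Complex.dist_eq_re_im, hw1re, hw1im, hw2re, hw2im]
    congr 1; ring
  constructor
  · rw [sK, hSinf, hdist, hD, Real.sqrt_div (by positivity)]
  · rw [Real.le_sqrt ha.le (by positivity), le_div_iff₀ (by positivity)]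
    nlinarith [mul_nonneg (by nlinarith : (0:ℝ) ≤ 1 - a^2) (sq_nonneg (u₁ - u₂))]
end
end

section
/- Let C = ∫₀¹ dt/√(1+t⁴), let f(z) = C^{-1} ∫₀^z dζ/√(1+ζ⁴) on the open unit disc D, and let B(r) = ∫₀^r dt/√(1−t⁴) for 0 ≤ r < 1. Let 0 < a < 1 and r ∈ (0,1) be related by √2·C·a = B(r). If z ∈ D and f(z) lies in the closed square [−a,a]² (that is, |Re f(z)| ≤ a and |Im f(z)| ≤ a), then |z| ≤ r. -/
open Complex Set Real

noncomputable section

namespace Stmt5Aux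
open MeasureTheory intervalIntegral


def hS (w : ℂ) : ℂ := ((1 + w ^ 4) ^ ((1 : ℂ)/2))⁻¹
def dhS (w : ℂ) : ℂ := -(2:ℂ) * w^3 * hS w / (1 + w^4)

lemma base_re {w : ℂ} (h : ‖w‖ < 1) : 0 < (1 + w^4).re := by
  have h1 : ‖w^4‖ < 1 := by rw [norm_pow]; exact pow_lt_one₀ (norm_nonneg w) h (by norm_num)
  have h2 : -(1:ℝ) < (w^4).re := by
    have := neg_abs_le (w^4).re
    have := Complex.abs_re_le_norm (w^4)
    have : |(w^4).re| ≤ ‖w^4‖ := Complex.abs_re_le_norm (w^4)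
    nlinarith [neg_abs_le (w^4).re]
  simp only [Complex.add_re, Complex.one_re]
  linarith

lemma base_slit {w : ℂ} (h : ‖w‖ < 1) : (1 + w^4) ∈ Complex.slitPlane :=
  Or.inl (base_re h)

lemma base_ne {w : ℂ} (h : ‖w‖ < 1) : 1 + w^4 ≠ 0 := by
  intro h0
  have := base_re h
  rw [h0] at this
  simp at this

lemma sq_root {w : ℂ} : ((1 + w^4) ^ ((1:ℂ)/2))^2 = 1 + w^4 := by
  have : (1:ℂ)/2 = ((2:ℕ):ℂ)⁻¹ := by norm_num
  rw [this]
  exact Complex.cpow_nat_inv_pow _ (by norm_num)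

lemma root_ne {w : ℂ} (h : ‖w‖ < 1) : (1 + w^4) ^ ((1:ℂ)/2) ≠ 0 := by
  intro h0
  have := sq_root (w := w)
  rw [h0] at this
  exact base_ne h (by rw [← this]; ring)

lemma root_re_pos {w : ℂ} (h : ‖w‖ < 1) : 0 < ((1 + w^4) ^ ((1:ℂ)/2)).re := by
  rw [Complex.cpow_def_of_ne_zero (base_ne h)]
  rw [Complex.exp_re]
  apply mul_pos (Real.exp_pos _)
  apply Real.cos_pos_of_mem_Ioo
  have harg : |Complex.arg (1 + w^4)| < π/2 :=
    Complex.abs_arg_lt_pi_div_two_iff.2 (Or.inl (base_re h))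
  have him : (Complex.log (1 + w^4) * ((1:ℂ)/2)).im = Complex.arg (1 + w^4) / 2 := by
    simp [Complex.mul_im, Complex.log_im]
    ring
  rw [him]
  constructor
  · nlinarith [abs_lt.1 harg, Real.pi_pos]
  · nlinarith [abs_lt.1 harg, Real.pi_pos]

lemma continuousAt_hS {w : ℂ} (h : ‖w‖ < 1) : ContinuousAt hS w := by
  apply ContinuousAt.inv₀
  · exact ContinuousAt.cpow (by fun_prop) continuousAt_const (base_slit h)
  · exact root_ne h

lemma hasDerivAt_hS {w : ℂ} (h : ‖w‖ < 1) : HasDerivAt hS (dhS w) w := by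
  have hbase : HasDerivAt (fun w : ℂ => 1 + w^4) (4 * w^3) w := by
    simpa using ((hasDerivAt_pow 4 w).const_add 1)
  have hg : HasDerivAt (fun w : ℂ => (1 + w^4) ^ ((1:ℂ)/2))
      ((1:ℂ)/2 * (1 + w^4) ^ ((1:ℂ)/2 - 1) * (4 * w^3)) w :=
    hbase.cpow_const (base_slit h)
  have hinv := hg.inv (root_ne h)
  refine hinv.congr_deriv ?_
  have hexp : ((1:ℂ)/2 - 1) = -((1:ℂ)/2) := by norm_num
  rw [hexp, Complex.cpow_neg]
  have hs2 := sq_root (w := w)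
  rw [dhS, hS]
  set s := (1 + w^4) ^ ((1:ℂ)/2) with hs
  rw [← hs2]
  have hsne : s ≠ 0 := root_ne h
  field_simp
  ring

lemma continuousAt_dhS {w : ℂ} (h : ‖w‖ < 1) : ContinuousAt dhS w := by
  unfold dhS
  apply ContinuousAt.div
  · exact (by fun_prop : ContinuousAt (fun w : ℂ => -(2:ℂ) * w^3) w).mul (continuousAt_hS h)
  · fun_prop
  · exact base_ne h

attribute [irreducible] hS dhS



lemma norm_c {ρ β : ℝ} (hρ0 : 0 ≤ ρ) (hρ1 : ρ < 1) :
    ‖(ρ:ℂ) * Complex.exp (↑β * Complex.I)‖ < 1 := by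
  rw [norm_mul, Complex.norm_exp_ofReal_mul_I,
    Complex.norm_real, Real.norm_eq_abs, _root_.abs_of_nonneg hρ0, mul_one]
  exact hρ1

lemma alg_step {X Y sb cb : ℝ} (hX : 0 < X) (hY : 0 ≤ Y) (hsb : 0 ≤ sb) (hcb : 0 < cb)
    (hcon3 : 2*(X*Y)*(cb^2 - sb^2) ≤ (X^2-Y^2)*(2*sb*cb)) : 0 ≤ X * sb - Y * cb := by
  have hfac : 0 ≤ (X * sb - Y * cb) * (X * cb + Y * sb) := by nlinarith [hcon3]
  have hposf : 0 < X * cb + Y * sb := by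
    have := mul_pos hX hcb
    nlinarith [mul_nonneg hY hsb]
  by_contra hneg2
  push_neg at hneg2
  nlinarith [mul_pos (neg_pos.2 hneg2) hposf]

lemma key_sign {ρ β : ℝ} (hρ0 : 0 ≤ ρ) (hρ1 : ρ < 1) (hβ0 : 0 ≤ β) (hβ : β ≤ π/4) :
    (Complex.I * ((ρ:ℂ) * Complex.exp (↑β * Complex.I)) *
      hS ((ρ:ℂ) * Complex.exp (↑β * Complex.I))).re ≤ 0 := by
  have hpi := Real.pi_pos
  obtain ⟨c, hc⟩ : ∃ c : ℂ, (ρ:ℂ) * Complex.exp (↑β * Complex.I) = c := ⟨_, rfl⟩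
  rw [hc]
  have hcn : ‖c‖ < 1 := by rw [← hc]; exact norm_c hρ0 hρ1
  have hc4 : c^4 = ((ρ^4 : ℝ) : ℂ) * Complex.exp (↑(4*β) * Complex.I) := by
    rw [← hc, mul_pow, ← Complex.exp_nat_mul]
    push_cast
    ring_nf
  have hcre : c.re = ρ * Real.cos β := by
    rw [← hc, Complex.re_ofReal_mul, Complex.exp_ofReal_mul_I_re]
  have hcim : c.im = ρ * Real.sin β := by
    rw [← hc, Complex.im_ofReal_mul, Complex.exp_ofReal_mul_I_im]
  have hwre : (1 + c^4).re = 1 + ρ^4 * Real.cos (4*β) := by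
    rw [Complex.add_re, Complex.one_re, hc4, Complex.re_ofReal_mul,
      Complex.exp_ofReal_mul_I_re]
  have hwim : (1 + c^4).im = ρ^4 * Real.sin (4*β) := by
    rw [Complex.add_im, Complex.one_im, hc4, Complex.im_ofReal_mul,
      Complex.exp_ofReal_mul_I_im, zero_add]
  obtain ⟨s, hs⟩ : ∃ s : ℂ, (1 + c^4) ^ ((1:ℂ)/2) = s := ⟨_, rfl⟩
  have hXpos : 0 < s.re := hs ▸ root_re_pos hcn
  have hsne : s ≠ 0 := hs ▸ root_ne hcn
  have hs2 : s^2 = 1 + c^4 := by rw [← hs]; exact sq_root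
  have hre2 : s.re^2 - s.im^2 = 1 + ρ^4 * Real.cos (4*β) := by
    have := congrArg Complex.re hs2
    rw [pow_two, Complex.mul_re, hwre] at this
    rw [← this]; ring
  have him2 : 2*(s.re*s.im) = ρ^4 * Real.sin (4*β) := by
    have := congrArg Complex.im hs2
    rw [pow_two, Complex.mul_im, hwim] at this
    rw [← this]; ring
  have hsin4 : 0 ≤ Real.sin (4*β) :=
    Real.sin_nonneg_of_nonneg_of_le_pi (by linarith) (by linarith)
  have hsin2 : 0 ≤ Real.sin (2*β) :=
    Real.sin_nonneg_of_nonneg_of_le_pi (by linarith) (by linarith)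
  have hcosβ : 0 < Real.cos β := by
    apply Real.cos_pos_of_mem_Ioo; constructor <;> nlinarith
  have hsinβ : 0 ≤ Real.sin β :=
    Real.sin_nonneg_of_nonneg_of_le_pi (by linarith) (by linarith)
  have hYnn : 0 ≤ s.im := by
    by_contra hneg
    push_neg at hneg
    nlinarith [mul_pos hXpos (neg_pos.2 hneg), mul_nonneg (pow_nonneg hρ0 4) hsin4]
  have hρ4 : ρ^4 ≤ 1 := pow_le_one₀ hρ0 hρ1.le
  have hcon : ρ^4 * Real.sin (4*β) * Real.cos (2*β)
      ≤ (1 + ρ^4*Real.cos (4*β)) * Real.sin (2*β) := by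
    have h1 : Real.sin (4*β) * Real.cos (2*β) - Real.cos (4*β) * Real.sin (2*β)
        = Real.sin (2*β) := by
      rw [← Real.sin_sub]; congr 1; ring
    nlinarith
  have hs2b : Real.sin (2*β) = 2 * Real.sin β * Real.cos β := Real.sin_two_mul β
  have hc2b : Real.cos (2*β) = Real.cos β^2 - Real.sin β^2 := Real.cos_two_mul' β
  have hcon2 : 2*(s.re*s.im) * Real.cos (2*β) ≤ (s.re^2 - s.im^2) * Real.sin (2*β) := by
    rw [him2, hre2]; exact hcon
  have hcon3 : 2*(s.re*s.im)*(Real.cos β^2 - Real.sin β^2)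
      ≤ (s.re^2 - s.im^2)*(2*Real.sin β*Real.cos β) := by
    rw [← hs2b, ← hc2b]; exact hcon2
  have hmain : 0 ≤ s.re * Real.sin β - s.im * Real.cos β :=
    alg_step hXpos hYnn hsinβ hcosβ hcon3
  have h0 : hS c = s⁻¹ := by simp only [hS]; rw [hs]
  have hgoal : Complex.I * c * hS c = (Complex.I * c) / s := by
    rw [h0, div_eq_mul_inv]
  rw [hgoal, Complex.div_re, ← add_div]
  apply div_nonpos_of_nonpos_of_nonneg
  · have h1 : (Complex.I * c).re = -c.im := by simp
    have h2 : (Complex.I * c).im = c.re := by simp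
    rw [h1, h2, hcre, hcim]
    nlinarith [mul_nonneg hρ0 hmain]
  · exact Complex.normSq_nonneg s


def ce (ρ β : ℝ) : ℂ := (ρ:ℂ) * Complex.exp (↑β * Complex.I)
def FF (z : ℂ) : ℂ := ∫ t in (0:ℝ)..1, z * hS ((t:ℂ) * z)
def QQ (ρ t β : ℝ) : ℂ :=
  ce ρ β * (hS ((t:ℂ) * ce ρ β) + ((t:ℂ) * ce ρ β) * dhS ((t:ℂ) * ce ρ β))

lemma norm_ce {ρ β : ℝ} (hρ0 : 0 ≤ ρ) : ‖ce ρ β‖ = ρ := by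
  rw [ce, norm_mul, Complex.norm_exp_ofReal_mul_I,
    Complex.norm_real, Real.norm_eq_abs, _root_.abs_of_nonneg hρ0, mul_one]

lemma norm_t_ce {ρ β t : ℝ} (hρ0 : 0 ≤ ρ) (hρ1 : ρ < 1) (ht : t ∈ Icc (0:ℝ) 1) :
    ‖(t:ℂ) * ce ρ β‖ < 1 := by
  rw [norm_mul, norm_ce hρ0, Complex.norm_real, Real.norm_eq_abs,
    _root_.abs_of_nonneg ht.1]
  nlinarith [ht.2]

lemma hasDerivAt_ce (ρ β : ℝ) : HasDerivAt (fun β => ce ρ β) (Complex.I * ce ρ β) β := by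
  have hE : HasDerivAt (fun z : ℂ => (ρ:ℂ) * Complex.exp (z * Complex.I))
      ((ρ:ℂ) * (Complex.exp ((β:ℂ) * Complex.I) * (1 * Complex.I))) (β:ℂ) :=
    (((hasDerivAt_id ((β:ℂ))).mul_const Complex.I).cexp).const_mul (ρ:ℂ)
  have := hE.comp_ofReal
  refine this.congr_deriv ?_
  rw [ce]
  ring

lemma continuous_ce (ρ : ℝ) : Continuous (fun β => ce ρ β) := by
  unfold ce
  fun_prop


lemma hasDerivAt_beta {ρ t : ℝ} (hρ0 : 0 ≤ ρ) (hρ1 : ρ < 1) (ht : t ∈ Icc (0:ℝ) 1) (β : ℝ) :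
    HasDerivAt (fun β => ce ρ β * hS ((t:ℂ) * ce ρ β)) (Complex.I * QQ ρ t β) β := by
  have hc := hasDerivAt_ce ρ β
  have hinner : HasDerivAt (fun β => (t:ℂ) * ce ρ β) ((t:ℂ) * (Complex.I * ce ρ β)) β :=
    hc.const_mul (t:ℂ)
  have houter : HasDerivAt (fun β => hS ((t:ℂ) * ce ρ β))
      (dhS ((t:ℂ) * ce ρ β) * ((t:ℂ) * (Complex.I * ce ρ β))) β :=
    (hasDerivAt_hS (norm_t_ce hρ0 hρ1 ht)).comp β hinner
  have := hc.mul houter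
  refine this.congr_deriv ?_
  rw [QQ]
  ring

lemma hasDerivAt_t {ρ β : ℝ} (hρ0 : 0 ≤ ρ) (hρ1 : ρ < 1) {t : ℝ} (ht : t ∈ Icc (0:ℝ) 1) :
    HasDerivAt (fun t : ℝ => ((t:ℂ) * ce ρ β) * hS ((t:ℂ) * ce ρ β)) (QQ ρ t β) t := by
  have hN : HasDerivAt (fun ζ : ℂ => (ζ * ce ρ β) * hS (ζ * ce ρ β))
      ((1 * ce ρ β) * hS ((t:ℂ) * ce ρ β)
        + ((t:ℂ) * ce ρ β) * (dhS ((t:ℂ) * ce ρ β) * (1 * ce ρ β))) ((t:ℂ)) := by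
    have h1 : HasDerivAt (fun ζ : ℂ => ζ * ce ρ β) (1 * ce ρ β) ((t:ℂ)) :=
      (hasDerivAt_id _).mul_const _
    have h2 : HasDerivAt (fun ζ : ℂ => hS (ζ * ce ρ β))
        (dhS ((t:ℂ) * ce ρ β) * (1 * ce ρ β)) ((t:ℂ)) :=
      HasDerivAt.comp (t:ℂ) (hasDerivAt_hS (norm_t_ce hρ0 hρ1 ht)) h1
    exact h1.mul h2
  have := hN.comp_ofReal
  convert this using 1
  rw [QQ]
  ring

lemma continuous_beta_aux {ρ t : ℝ} (hρ0 : 0 ≤ ρ) (hρ1 : ρ < 1) (ht : t ∈ Icc (0:ℝ) 1) :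
    Continuous (fun β => QQ ρ t β) := by
  rw [continuous_iff_continuousAt]
  intro β
  have hn := norm_t_ce (β := β) hρ0 hρ1 ht
  have hci : ContinuousAt (fun β => (t:ℂ) * ce ρ β) β := by
    exact ((continuous_ce ρ).continuousAt).const_mul _
  have h1 : ContinuousAt (fun β => hS ((t:ℂ) * ce ρ β)) β :=
    ContinuousAt.comp (continuousAt_hS hn) hci
  have h2 : ContinuousAt (fun β => dhS ((t:ℂ) * ce ρ β)) β :=
    ContinuousAt.comp (continuousAt_dhS hn) hci
  unfold QQ
  exact ((continuous_ce ρ).continuousAt).mul (h1.add (hci.mul h2))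

lemma continuousOn_prod {ρ : ℝ} (hρ0 : 0 ≤ ρ) (hρ1 : ρ < 1) (S : Set ℝ) :
    ContinuousOn (fun p : ℝ × ℝ => QQ ρ p.1 p.2) ((Icc (0:ℝ) 1) ×ˢ S) := by
  intro p hp
  apply ContinuousAt.continuousWithinAt
  have hn : ‖(p.1:ℂ) * ce ρ p.2‖ < 1 := norm_t_ce hρ0 hρ1 hp.1
  have hci : ContinuousAt (fun q : ℝ × ℝ => (q.1:ℂ) * ce ρ q.2) p := by
    apply ContinuousAt.mul
    · exact Complex.continuous_ofReal.continuousAt.comp continuousAt_fst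
    · exact ((continuous_ce ρ).continuousAt).comp continuousAt_snd
  have hce2 : ContinuousAt (fun q : ℝ × ℝ => ce ρ q.2) p :=
    ((continuous_ce ρ).continuousAt).comp continuousAt_snd
  have h1 : ContinuousAt (fun q : ℝ × ℝ => hS ((q.1:ℂ) * ce ρ q.2)) p :=
    ContinuousAt.comp (continuousAt_hS hn) hci
  have h2 : ContinuousAt (fun q : ℝ × ℝ => dhS ((q.1:ℂ) * ce ρ q.2)) p :=
    ContinuousAt.comp (continuousAt_dhS hn) hci
  unfold QQ
  exact hce2.mul (h1.add (hci.mul h2))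


lemma ftc_beta {ρ t : ℝ} (hρ0 : 0 ≤ ρ) (hρ1 : ρ < 1) (ht : t ∈ Icc (0:ℝ) 1) (a b : ℝ) :
    ∫ β in a..b, Complex.I * QQ ρ t β
      = ce ρ b * hS ((t:ℂ) * ce ρ b) - ce ρ a * hS ((t:ℂ) * ce ρ a) := by
  apply intervalIntegral.integral_eq_sub_of_hasDerivAt
  · intro β _
    exact hasDerivAt_beta hρ0 hρ1 ht β
  · exact (continuous_const.mul (continuous_beta_aux hρ0 hρ1 ht)).intervalIntegrable _ _

lemma cont_t {ρ β : ℝ} (hρ0 : 0 ≤ ρ) (hρ1 : ρ < 1) :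
    ContinuousOn (fun t => QQ ρ t β) (Icc (0:ℝ) 1) := by
  unfold QQ
  intro t ht
  apply ContinuousAt.continuousWithinAt
  have hn : ‖(t:ℂ) * ce ρ β‖ < 1 := norm_t_ce hρ0 hρ1 ht
  have hci : ContinuousAt (fun t : ℝ => (t:ℂ) * ce ρ β) t :=
    (Complex.continuous_ofReal.continuousAt).mul continuousAt_const
  have h1 : ContinuousAt (fun t : ℝ => hS ((t:ℂ) * ce ρ β)) t :=
    ContinuousAt.comp (continuousAt_hS hn) hci
  have h2 : ContinuousAt (fun t : ℝ => dhS ((t:ℂ) * ce ρ β)) t :=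
    ContinuousAt.comp (continuousAt_dhS hn) hci
  exact continuousAt_const.mul (h1.add (hci.mul h2))

lemma ftc_t {ρ : ℝ} (hρ0 : 0 ≤ ρ) (hρ1 : ρ < 1) (β : ℝ) :
    ∫ t in (0:ℝ)..1, QQ ρ t β = ce ρ β * hS (ce ρ β) := by
  have h := intervalIntegral.integral_eq_sub_of_hasDerivAt
    (f := fun t : ℝ => ((t:ℂ) * ce ρ β) * hS ((t:ℂ) * ce ρ β))
    (f' := fun t => QQ ρ t β) (a := 0) (b := 1)
    (fun t htu => hasDerivAt_t hρ0 hρ1 (by rwa [uIcc_of_le zero_le_one] at htu))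
    (ContinuousOn.intervalIntegrable_of_Icc zero_le_one (cont_t hρ0 hρ1))
  rw [h]
  push_cast
  simp

lemma cont_FF_integrand {z : ℂ} (hz : ‖z‖ < 1) :
    ContinuousOn (fun t : ℝ => z * hS ((t:ℂ) * z)) (Icc (0:ℝ) 1) := by
  intro t ht
  apply ContinuousAt.continuousWithinAt
  have hn : ‖(t:ℂ) * z‖ < 1 := by
    rw [norm_mul, Complex.norm_real, Real.norm_eq_abs, _root_.abs_of_nonneg ht.1]
    nlinarith [ht.2, norm_nonneg z, hz]
  have hci : ContinuousAt (fun t : ℝ => (t:ℂ) * z) t :=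
    (Complex.continuous_ofReal.continuousAt).mul continuousAt_const
  have h1 : ContinuousAt (fun t : ℝ => hS ((t:ℂ) * z)) t :=
    ContinuousAt.comp (continuousAt_hS hn) hci
  exact continuousAt_const.mul h1

lemma fubini {ρ θ : ℝ} (hρ0 : 0 ≤ ρ) (hρ1 : ρ < 1) (hθ : θ ≤ π/4) :
    Integrable (Function.uncurry fun t β => Complex.I * QQ ρ t β)
      ((volume.restrict (Ioc (0:ℝ) 1)).prod (volume.restrict (Ioc θ (π/4)))) := by
  rw [Measure.prod_restrict]
  apply MeasureTheory.IntegrableOn.mono_set (t := (Icc (0:ℝ) 1) ×ˢ (Icc θ (π/4)))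
  · apply ContinuousOn.integrableOn_compact (isCompact_Icc.prod isCompact_Icc)
    have := continuousOn_prod (ρ := ρ) hρ0 hρ1 (Icc θ (π/4))
    exact continuousOn_const.mul this
  · exact Set.prod_mono Ioc_subset_Icc_self Ioc_subset_Icc_self

lemma main_identity {ρ θ : ℝ} (hρ0 : 0 ≤ ρ) (hρ1 : ρ < 1) (hθ : θ ≤ π/4) :
    FF (ce ρ θ) = FF (ce ρ (π/4))
      - ∫ β in θ..(π/4), Complex.I * (ce ρ β * hS (ce ρ β)) := by
  have hswap := MeasureTheory.integral_integral_swap (fubini hρ0 hρ1 hθ)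
  have h1 : FF (ce ρ θ) = ∫ t in (0:ℝ)..1,
      (ce ρ (π/4) * hS ((t:ℂ) * ce ρ (π/4)) - ∫ β in θ..(π/4), Complex.I * QQ ρ t β) := by
    rw [FF]
    apply intervalIntegral.integral_congr
    intro t ht
    rw [uIcc_of_le zero_le_one] at ht
    dsimp only
    rw [ftc_beta hρ0 hρ1 ht θ (π/4)]
    ring
  rw [h1]
  have hρ01 : ‖ce ρ (π/4)‖ < 1 := by rw [norm_ce hρ0]; exact hρ1
  have hi1 : IntervalIntegrable (fun t => ce ρ (π/4) * hS ((t:ℂ) * ce ρ (π/4))) volume 0 1 :=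
    ContinuousOn.intervalIntegrable_of_Icc zero_le_one (cont_FF_integrand hρ01)
  have hi2 : IntervalIntegrable (fun t => ∫ β in θ..(π/4), Complex.I * QQ ρ t β) volume 0 1 := by
    rw [intervalIntegrable_iff_integrableOn_Ioc_of_le zero_le_one]
    have h3 := (fubini hρ0 hρ1 hθ).integral_prod_left
    simp only [Function.uncurry] at h3
    simp only [intervalIntegral.integral_of_le hθ]
    exact h3
  rw [intervalIntegral.integral_sub hi1 hi2]
  have e1 : (∫ t in (0:ℝ)..1, (∫ β in θ..(π/4), Complex.I * QQ ρ t β))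
      = ∫ β in θ..(π/4), (∫ t in (0:ℝ)..1, Complex.I * QQ ρ t β) := by
    rw [intervalIntegral.integral_of_le (zero_le_one (α := ℝ)), intervalIntegral.integral_of_le hθ]
    simp only [intervalIntegral.integral_of_le hθ,
      intervalIntegral.integral_of_le (zero_le_one (α := ℝ))]
    exact hswap
  have e2 : ∀ β, (∫ t in (0:ℝ)..1, Complex.I * QQ ρ t β)
      = Complex.I * (ce ρ β * hS (ce ρ β)) := by
    intro β
    rw [intervalIntegral.integral_const_mul, ftc_t hρ0 hρ1 β]
  rw [e1]
  congr 1
  exact intervalIntegral.integral_congr (fun β _ => e2 β)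



lemma diag {ρ : ℝ} (hρ0 : 0 < ρ) (hρ1 : ρ < 1) :
    (FF (ce ρ (π/4))).re = (Real.sqrt 2/2) * Bint ρ := by
  have he4 : Complex.exp (↑(π/4) * Complex.I)^4 = -1 := by
    rw [← Complex.exp_nat_mul]
    rw [show ((4:ℕ):ℂ) * (↑(π/4) * Complex.I) = ↑π * Complex.I by push_cast; ring]
    exact Complex.exp_pi_mul_I
  have hstep : ∀ t ∈ Icc (0:ℝ) 1, ce ρ (π/4) * hS ((t:ℂ) * ce ρ (π/4))
      = Complex.exp (↑(π/4) * Complex.I)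
        * ((ρ * (1 / Real.sqrt (1 - (ρ*t)^4)) : ℝ) : ℂ) := by
    intro t ht
    have hρt : 0 ≤ ρ * t := mul_nonneg hρ0.le ht.1
    have hρt1 : ρ * t < 1 := by nlinarith [ht.2]
    have hx : (0:ℝ) ≤ 1 - (ρ*t)^4 := by nlinarith [pow_le_one₀ (n := 4) hρt hρt1.le]
    have hbase : 1 + ((t:ℂ) * ce ρ (π/4))^4 = (((1 - (ρ*t)^4 : ℝ)) : ℂ) := by
      rw [ce]
      rw [show ((t:ℂ) * ((ρ:ℂ) * Complex.exp (↑(π/4) * Complex.I)))^4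
        = ((t:ℂ)*(ρ:ℂ))^4 * (Complex.exp (↑(π/4) * Complex.I))^4 by ring, he4]
      push_cast
      ring
    have hroot : (((1 - (ρ*t)^4 : ℝ)) : ℂ) ^ ((1:ℂ)/2)
        = ((Real.sqrt (1 - (ρ*t)^4) : ℝ) : ℂ) := by
      rw [show ((1:ℂ)/2) = (((1/2 : ℝ) : ℝ) : ℂ) by norm_num]
      rw [← Complex.ofReal_cpow hx]
      rw [Real.sqrt_eq_rpow]
    have hhs : hS ((t:ℂ) * ce ρ (π/4))
        = (((Real.sqrt (1 - (ρ*t)^4) : ℝ) : ℂ))⁻¹ := by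
      simp only [hS]
      rw [hbase, hroot]
    rw [hhs, ce]
    push_cast
    ring
  have h1 : FF (ce ρ (π/4)) = Complex.exp (↑(π/4) * Complex.I)
      * ((∫ t in (0:ℝ)..1, ρ * (1 / Real.sqrt (1 - (ρ*t)^4)) : ℝ) : ℂ) := by
    rw [FF]
    rw [intervalIntegral.integral_congr (g := fun t : ℝ => Complex.exp (↑(π/4) * Complex.I)
        * ((ρ * (1 / Real.sqrt (1 - (ρ*t)^4)) : ℝ) : ℂ))
      (by intro t ht; rw [uIcc_of_le zero_le_one] at ht; exact hstep t ht)]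
    rw [intervalIntegral.integral_const_mul, intervalIntegral.integral_ofReal]
  have h2 : (∫ t in (0:ℝ)..1, ρ * (1 / Real.sqrt (1 - (ρ*t)^4))) = Bint ρ := by
    rw [intervalIntegral.integral_const_mul]
    rw [intervalIntegral.integral_comp_mul_left (f := fun x => 1 / Real.sqrt (1 - x^4))
      (ne_of_gt hρ0)]
    rw [Bint]
    rw [mul_zero, mul_one, smul_eq_mul]
    rw [← mul_assoc, mul_inv_cancel₀ (ne_of_gt hρ0), one_mul]
  rw [h1, h2, mul_comm, Complex.re_ofReal_mul, Complex.exp_ofReal_mul_I_re,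
    Real.cos_pi_div_four, mul_comm]


lemma cont_chc {ρ : ℝ} (hρ0 : 0 ≤ ρ) (hρ1 : ρ < 1) :
    Continuous (fun β => Complex.I * (ce ρ β * hS (ce ρ β))) := by
  rw [continuous_iff_continuousAt]
  intro β
  have hn : ‖ce ρ β‖ < 1 := by rw [norm_ce hρ0]; exact hρ1
  have h1 : ContinuousAt (fun β => hS (ce ρ β)) β :=
    ContinuousAt.comp (continuousAt_hS hn) (continuous_ce ρ).continuousAt
  exact continuousAt_const.mul (((continuous_ce ρ).continuousAt).mul h1)

lemma core {ρ θ : ℝ} (hρ0 : 0 < ρ) (hρ1 : ρ < 1) (hθ0 : 0 ≤ θ) (hθ : θ ≤ π/4) :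
    Real.sqrt 2/2 * Bint ρ ≤ (FF (ce ρ θ)).re := by
  have hid := main_identity hρ0.le hρ1 hθ
  have hci : IntervalIntegrable (fun β => Complex.I * (ce ρ β * hS (ce ρ β)))
      volume θ (π/4) := (cont_chc hρ0.le hρ1).intervalIntegrable _ _
  have hre : (∫ β in θ..(π/4), Complex.I * (ce ρ β * hS (ce ρ β))).re
      = ∫ β in θ..(π/4), (Complex.I * (ce ρ β * hS (ce ρ β))).re := by
    have := ContinuousLinearMap.intervalIntegral_comp_comm Complex.reCLM hci
    simpa using this.symm
  have hneg : (∫ β in θ..(π/4), (Complex.I * (ce ρ β * hS (ce ρ β))).re) ≤ 0 := by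
    rw [← neg_nonneg, ← intervalIntegral.integral_neg]
    apply intervalIntegral.integral_nonneg hθ
    intro β hβ
    rw [neg_nonneg, ← mul_assoc]
    exact key_sign hρ0.le hρ1 (le_trans hθ0 hβ.1) hβ.2
  have := congrArg Complex.re hid
  rw [Complex.sub_re, hre] at this
  rw [this, diag hρ0 hρ1]
  linarith


lemma hS_eq_of_pow {w₁ w₂ : ℂ} (h : w₁^4 = w₂^4) : hS w₁ = hS w₂ := by
  simp only [hS, h]

lemma I_pow_four : (Complex.I)^4 = 1 := by
  rw [show (Complex.I)^4 = ((Complex.I)^2)^2 by ring, Complex.I_sq]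
  norm_num

lemma FF_I (z : ℂ) : FF (Complex.I * z) = Complex.I * FF z := by
  rw [FF, FF, ← intervalIntegral.integral_const_mul]
  apply intervalIntegral.integral_congr
  intro t _
  dsimp only
  rw [hS_eq_of_pow (w₂ := (t:ℂ) * z)
    (by rw [show ((t:ℂ) * (Complex.I * z))^4 = (Complex.I)^4 * ((t:ℂ)*z)^4 by ring,
      I_pow_four, one_mul])]
  ring

lemma FF_neg (z : ℂ) : FF (-z) = - FF z := by
  rw [FF, FF, ← intervalIntegral.integral_neg]
  apply intervalIntegral.integral_congr
  intro t _
  dsimp only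
  rw [hS_eq_of_pow (w₂ := (t:ℂ) * z) (by ring)]
  ring

lemma hS_conj {w : ℂ} (h : ‖w‖ < 1) : hS ((starRingEnd ℂ) w) = (starRingEnd ℂ) (hS w) := by
  simp only [hS]
  have h1 : 1 + ((starRingEnd ℂ) w)^4 = (starRingEnd ℂ) (1 + w^4) := by
    rw [map_add, map_one, map_pow]
  rw [h1]
  have harg : (1 + w^4).arg ≠ π := by
    intro hp
    have := Complex.arg_eq_pi_iff.1 hp
    linarith [base_re h, this.1]
  rw [Complex.conj_cpow _ _ harg]
  rw [show (starRingEnd ℂ) ((1:ℂ)/2) = (1:ℂ)/2 by rw [map_div₀, map_one, map_ofNat]]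
  rw [map_inv₀]

lemma FF_conj {z : ℂ} (hz : ‖z‖ < 1) : FF ((starRingEnd ℂ) z) = (starRingEnd ℂ) (FF z) := by
  rw [FF, FF]
  have hi : IntervalIntegrable (fun t : ℝ => z * hS ((t:ℂ) * z)) volume 0 1 :=
    ContinuousOn.intervalIntegrable_of_Icc zero_le_one (cont_FF_integrand hz)
  have hL := ContinuousLinearMap.intervalIntegral_comp_comm
    (Complex.conjCLE.toContinuousLinearMap) hi
  simp only [ContinuousLinearEquiv.coe_coe, Complex.conjCLE_apply] at hL
  rw [← hL]
  apply intervalIntegral.integral_congr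
  intro t ht
  rw [uIcc_of_le zero_le_one] at ht
  dsimp only
  have hn : ‖(t:ℂ) * z‖ < 1 := by
    rw [norm_mul, Complex.norm_real, Real.norm_eq_abs,
      _root_.abs_of_nonneg ht.1]
    nlinarith [ht.2, norm_nonneg z, hz]
  have h2 : (t:ℂ) * (starRingEnd ℂ) z = (starRingEnd ℂ) ((t:ℂ) * z) := by
    rw [map_mul, Complex.conj_ofReal]
  rw [h2, hS_conj hn, ← map_mul]

lemma FF_zero : FF 0 = 0 := by
  rw [FF]
  simp

lemma quadrant_pos {z : ℂ} (hz : ‖z‖ < 1) (hzne : z ≠ 0) (h : |z.im| ≤ z.re)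
    (him : 0 ≤ z.im) : Real.sqrt 2/2 * Bint ‖z‖ ≤ (FF z).re := by
  have hrepos : 0 < z.re := by
    rcases lt_or_eq_of_le (le_trans (abs_nonneg _) h) with h1 | h1
    · exact h1
    · exfalso
      apply hzne
      have him0 : z.im = 0 := by
        have := h
        rw [← h1] at this
        simpa [abs_nonpos_iff] using le_antisymm this (abs_nonneg _)
      apply Complex.ext <;> simp [← h1, him0]
  have hρ0 : 0 < ‖z‖ := norm_pos_iff.mpr hzne
  have hθ0 : 0 ≤ Complex.arg z := Complex.arg_nonneg_iff.2 him
  have hθhalf : |Complex.arg z| < π/2 := Complex.abs_arg_lt_pi_div_two_iff.2 (Or.inl hrepos)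
  have hsincos : Real.sin (Complex.arg z) ≤ Real.cos (Complex.arg z) := by
    have hs := Complex.sin_arg z
    have hc := Complex.cos_arg hzne
    rw [hs, hc, div_le_div_iff_of_pos_right hρ0]
    exact le_trans (le_abs_self _) h
  have hθle : Complex.arg z ≤ π/4 := by
    by_contra hgt
    push_neg at hgt
    have hpi := Real.pi_pos
    have hup := (abs_lt.1 hθhalf).2
    have h1 : Real.sin (π/4) < Real.sin (Complex.arg z) := by
      apply Real.strictMonoOn_sin ⟨by linarith, by linarith⟩ ⟨by linarith, by linarith⟩ hgt
    have h2 : Real.cos (Complex.arg z) < Real.cos (π/4) := by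
      apply Real.strictAntiOn_cos ⟨by linarith, by linarith⟩ ⟨by linarith, by linarith⟩ hgt
    rw [Real.sin_pi_div_four] at h1
    rw [Real.cos_pi_div_four] at h2
    linarith
  have hzeq : ce ‖z‖ (Complex.arg z) = z := by
    rw [ce]
    exact Complex.norm_mul_exp_arg_mul_I z
  have hρ1 : ‖z‖ < 1 := hz
  have := core hρ0 hρ1 hθ0 hθle
  rw [hzeq] at this
  exact this

lemma quadrant {z : ℂ} (hz : ‖z‖ < 1) (h : |z.im| ≤ z.re) :
    Real.sqrt 2/2 * Bint ‖z‖ ≤ (FF z).re := by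
  rcases eq_or_ne z 0 with hz0 | hz0
  · rw [hz0]
    simp [FF_zero, Bint]
  rcases le_or_gt 0 z.im with him | him
  · exact quadrant_pos hz hz0 h him
  · have hc : Real.sqrt 2/2 * Bint ‖(starRingEnd ℂ) z‖ ≤ (FF ((starRingEnd ℂ) z)).re := by
      apply quadrant_pos
      · rwa [RCLike.norm_conj]
      · simpa using hz0
      · simpa using h
      · simpa using him.le
    rw [RCLike.norm_conj, FF_conj hz] at hc
    simpa using hc

lemma Bint_integrable {x y : ℝ} (hx : -1 < x) (hy : y < 1) (hxy : x ≤ y) :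
    IntervalIntegrable (fun t => 1 / Real.sqrt (1 - t^4)) volume x y := by
  apply ContinuousOn.intervalIntegrable
  intro t ht
  rw [uIcc_of_le hxy] at ht
  have ht2 : t^2 < 1 := by nlinarith [ht.1, ht.2]
  have h4 : t^4 < 1 := by nlinarith [sq_nonneg t, ht2]
  exact ContinuousWithinAt.div continuousWithinAt_const
    ((Real.continuous_sqrt.comp (by fun_prop)).continuousWithinAt)
    (ne_of_gt (Real.sqrt_pos.2 (by linarith)))

lemma Bint_lt {x y : ℝ} (hx : 0 ≤ x) (hxy : x < y) (hy : y < 1) : Bint x < Bint y := by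
  have h1 := Bint_integrable (by linarith : (-1:ℝ) < 0) (by linarith) hx
  have h2 := Bint_integrable (by linarith : (-1:ℝ) < x) hy hxy.le
  have hkey : Bint x + ∫ t in x..y, 1 / Real.sqrt (1 - t^4) = Bint y := by
    rw [Bint, Bint]
    exact intervalIntegral.integral_add_adjacent_intervals h1 h2
  have hpos : 0 < ∫ t in x..y, 1 / Real.sqrt (1 - t^4) := by
    apply intervalIntegral.intervalIntegral_pos_of_pos_on h2
    · intro u hu
      have hu2 : u^2 < 1 := by nlinarith [hu.1, hu.2]
      have h4 : u^4 < 1 := by nlinarith [sq_nonneg u, hu2]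
      have hsp : 0 < Real.sqrt (1 - u^4) := Real.sqrt_pos.2 (by linarith)
      positivity
    · exact hxy
  linarith

lemma Csq_pos : 0 < Csq := by
  rw [Csq]
  apply intervalIntegral.intervalIntegral_pos_of_pos_on
  · apply ContinuousOn.intervalIntegrable
    apply ContinuousOn.div continuousOn_const
    · exact (Real.continuous_sqrt.comp (by fun_prop)).continuousOn
    · intro t _
      have : (0:ℝ) < 1 + t^4 := by positivity
      positivity
  · intro t _
    have : (0:ℝ) < 1 + t^4 := by positivity
    positivity
  · norm_num

lemma fSq_eq_FF (z : ℂ) : fSq z = ((Csq:ℝ):ℂ)⁻¹ * FF z := by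
  rw [fSq, FF]
  congr 1
  apply intervalIntegral.integral_congr
  intro t _
  dsimp only
  rw [hS, div_eq_mul_inv]

lemma final (a r : ℝ) (ha : 0 < a) (ha1 : a < 1) (hr : r ∈ Ioo (0 : ℝ) 1)
    (har : Real.sqrt 2 * Csq * a = Bint r) (z : ℂ) (hz : ‖z‖ < 1)
    (hre : |(fSq z).re| ≤ a) (him : |(fSq z).im| ≤ a) : ‖z‖ ≤ r := by
  have hC := Csq_pos
  have hre' : |(FF z).re| ≤ Csq * a := by
    have h1 : (fSq z).re = Csq⁻¹ * (FF z).re := by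
      rw [fSq_eq_FF, ← Complex.ofReal_inv, Complex.re_ofReal_mul]
    rw [h1, abs_mul, abs_of_pos (inv_pos.2 hC)] at hre
    calc |(FF z).re| = Csq * (Csq⁻¹ * |(FF z).re|) := by field_simp
    _ ≤ Csq * a := by nlinarith
  have him' : |(FF z).im| ≤ Csq * a := by
    have h1 : (fSq z).im = Csq⁻¹ * (FF z).im := by
      rw [fSq_eq_FF, ← Complex.ofReal_inv, Complex.im_ofReal_mul]
    rw [h1, abs_mul, abs_of_pos (inv_pos.2 hC)] at him
    calc |(FF z).im| = Csq * (Csq⁻¹ * |(FF z).im|) := by field_simp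
    _ ≤ Csq * a := by nlinarith
  -- main bound
  have hmax : Real.sqrt 2/2 * Bint ‖z‖ ≤ Csq * a := by
    rcases le_total (|z.im|) (|z.re|) with h1 | h1
    · rcases le_or_gt 0 z.re with h2 | h2
      · have := quadrant hz (by rwa [_root_.abs_of_nonneg h2] at h1)
        calc Real.sqrt 2/2 * Bint ‖z‖ ≤ (FF z).re := this
        _ ≤ |(FF z).re| := le_abs_self _
        _ ≤ Csq * a := hre'
      · have hq := quadrant (z := -z) (by rwa [norm_neg])
          (by rw [Complex.neg_im, Complex.neg_re, abs_neg]
              rwa [_root_.abs_of_nonpos h2.le] at h1)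
        rw [norm_neg, FF_neg, Complex.neg_re] at hq
        calc Real.sqrt 2/2 * Bint ‖z‖ ≤ -(FF z).re := hq
        _ ≤ |(FF z).re| := neg_le_abs _
        _ ≤ Csq * a := hre'
    · rcases le_or_gt 0 z.im with h2 | h2
      · have hq := quadrant (z := -(Complex.I * z))
          (by rw [norm_neg, norm_mul, Complex.norm_I, one_mul]; exact hz)
          (by simp only [Complex.neg_im, Complex.neg_re, Complex.mul_im, Complex.mul_re,
                Complex.I_re, Complex.I_im]
              ring_nf
              rw [abs_neg]
              rwa [_root_.abs_of_nonneg h2] at h1)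
        rw [norm_neg, norm_mul, Complex.norm_I, one_mul, FF_neg, FF_I] at hq
        have : (-(Complex.I * FF z)).re = (FF z).im := by simp
        rw [this] at hq
        calc Real.sqrt 2/2 * Bint ‖z‖ ≤ (FF z).im := hq
        _ ≤ |(FF z).im| := le_abs_self _
        _ ≤ Csq * a := him'
      · have hq := quadrant (z := Complex.I * z)
          (by rw [norm_mul, Complex.norm_I, one_mul]; exact hz)
          (by simp only [Complex.mul_im, Complex.mul_re, Complex.I_re, Complex.I_im]
              ring_nf
              rwa [_root_.abs_of_nonpos h2.le] at h1)
        rw [norm_mul, Complex.norm_I, one_mul, FF_I] at hq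
        have : (Complex.I * FF z).re = -(FF z).im := by simp
        rw [this] at hq
        calc Real.sqrt 2/2 * Bint ‖z‖ ≤ -(FF z).im := hq
        _ ≤ |(FF z).im| := neg_le_abs _
        _ ≤ Csq * a := him'
  -- conclude
  have hs2 : Real.sqrt 2 > 0 := by positivity
  have hBB : Bint ‖z‖ ≤ Bint r := by
    have h2 : Real.sqrt 2 * (Real.sqrt 2/2) = 1 := by
      rw [div_eq_mul_inv, ← mul_assoc, Real.mul_self_sqrt (by norm_num)]
      norm_num
    have h3 : Real.sqrt 2 * (Real.sqrt 2/2 * Bint ‖z‖) = Bint ‖z‖ := by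
      rw [← mul_assoc, h2, one_mul]
    have h4 : Real.sqrt 2 * (Csq * a) = Bint r := by rw [← mul_assoc]; exact har
    linarith [mul_le_mul_of_nonneg_left hmax hs2.le]
  by_contra hcon
  push_neg at hcon
  have := Bint_lt (le_of_lt hr.1) hcon hz
  linarith

end Stmt5Aux

/-- If `√2·C·a = B(r)` and `f(z)` lies in the closed square `[-a,a]²`, then `|z| ≤ r`. -/
theorem stmt5 (a r : ℝ) (ha : 0 < a) (ha1 : a < 1) (hr : r ∈ Ioo (0 : ℝ) 1)
    (har : Real.sqrt 2 * Csq * a = Bint r) (z : ℂ) (hz : ‖z‖ < 1)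
    (hre : |(fSq z).re| ≤ a) (him : |(fSq z).im| ≤ a) : ‖z‖ ≤ r := by
  exact Stmt5Aux.final a r ha ha1 hr har z hz hre him
end
end

section
/- Let C = ∫₀¹ dt/√(1+t⁴), f(z) = C^{-1} ∫₀^z dζ/√(1+ζ⁴) on the open unit disc D, and B(r) = ∫₀^r dt/√(1−t⁴). Let 0 < a < 1 and r ∈ (0,1) satisfy √2·C·a = B(r). Let u₁, u₂ ∈ [−a,a] satisfy |u₁ + u₂| ≤ a² + u₁u₂, set w₁ = u₁ − i·a, w₂ = u₂ + i·a, and let z₁ ≠ z₂ in D satisfy f(z₁) = w₁, f(z₂) = w₂ and |z₁| ≤ r, |z₂| ≤ r. Then |z₁ − z₂|/|1 − z₁·conj(z₂)| ≤ 2C·F(r)·s_K(w₁,w₂), where F(r) = √2·r / ((1+r²)·B(r)). -/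
open Complex Set Real

noncomputable section

lemma Csq_pos : 0 < Csq := by
  have hc : Continuous fun t : ℝ => 1 / Real.sqrt (1 + t ^ 4) := by
    apply Continuous.div continuous_const
    · exact Real.continuous_sqrt.comp (by continuity)
    · intro t; positivity
  unfold Csq
  apply intervalIntegral.intervalIntegral_pos_of_pos_on
  · exact hc.intervalIntegrable 0 1
  · intro x _; positivity
  · norm_num

lemma pseudo_bound (r : ℝ) (z₁ z₂ : ℂ) (hr0 : 0 < r) (hr1 : r < 1)
    (hz1 : ‖z₁‖ ≤ r) (hz2 : ‖z₂‖ ≤ r) :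
    ‖z₁ - z₂‖ / ‖1 - z₁ * (starRingEnd ℂ) z₂‖ ≤ 2 * r / (1 + r ^ 2) := by
  have hp0 : (0:ℝ) ≤ ‖z₁‖ := norm_nonneg _
  have hq0 : (0:ℝ) ≤ ‖z₂‖ := norm_nonneg _
  set p := ‖z₁‖ with hp
  set q := ‖z₂‖ with hq
  set x := (z₁ * (starRingEnd ℂ) z₂).re with hx
  have habs : ‖z₁ * (starRingEnd ℂ) z₂‖ = p * q := by
    rw [norm_mul]; simp [hp, hq]
  have hxpq : -(p * q) ≤ x := by
    have h1 := Complex.abs_re_le_norm (z₁ * (starRingEnd ℂ) z₂)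
    rw [habs] at h1
    have := abs_le.mp h1
    linarith [this.1]
  have hne : (1 : ℂ) - z₁ * (starRingEnd ℂ) z₂ ≠ 0 := by
    intro hzero
    have h1 : (1:ℂ) = z₁ * (starRingEnd ℂ) z₂ := by linear_combination hzero
    have h2 : ‖z₁ * (starRingEnd ℂ) z₂‖ = 1 := by rw [← h1]; simp
    rw [habs] at h2
    nlinarith
  have hdpos : 0 < ‖1 - z₁ * (starRingEnd ℂ) z₂‖ := norm_pos_iff.mpr hne
  rw [div_le_div_iff₀ hdpos (by positivity)]
  -- squared norms identities
  have hn1 : ‖z₁ - z₂‖ ^ 2 = p ^ 2 + q ^ 2 - 2 * x := by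
    have h := Complex.normSq_sub z₁ z₂
    simp only [Complex.normSq_eq_norm_sq] at h
    linarith
  have hn2 : ‖1 - z₁ * (starRingEnd ℂ) z₂‖ ^ 2 = 1 + (p * q) ^ 2 - 2 * x := by
    have h := Complex.normSq_sub 1 (z₁ * (starRingEnd ℂ) z₂)
    simp only [Complex.normSq_eq_norm_sq, norm_one, one_pow, one_mul,
      Complex.conj_re] at h
    rw [habs] at h
    linarith
  -- key squared inequality
  have hsq : (‖z₁ - z₂‖ * (1 + r ^ 2)) ^ 2 ≤ (2 * r * ‖1 - z₁ * (starRingEnd ℂ) z₂‖) ^ 2 := by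
    have e1 : (‖z₁ - z₂‖ * (1 + r ^ 2)) ^ 2 = (p ^ 2 + q ^ 2 - 2 * x) * (1 + r ^ 2) ^ 2 := by
      rw [mul_pow, hn1]
    have e2 : (2 * r * ‖1 - z₁ * (starRingEnd ℂ) z₂‖) ^ 2
        = 4 * r ^ 2 * (1 + (p * q) ^ 2 - 2 * x) := by
      rw [mul_pow, hn2]; ring
    rw [e1, e2]
    have hA : 0 ≤ (r - p) * (1 - r * q) + (r - q) * (1 - r * p) := by
      have : r * q ≤ r * r := by nlinarith
      have : r * p ≤ r * r := by nlinarith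
      nlinarith
    have hB : 0 ≤ 2 * r * (1 + p * q) + (1 + r ^ 2) * (p + q) := by positivity
    nlinarith [mul_nonneg hA hB, mul_nonneg (by linarith : (0:ℝ) ≤ x + p * q) (sq_nonneg (1 - r ^ 2))]
  have h1 : 0 ≤ ‖z₁ - z₂‖ * (1 + r ^ 2) := by positivity
  have h2 : 0 ≤ 2 * r * ‖1 - z₁ * (starRingEnd ℂ) z₂‖ := by positivity
  exact (pow_le_pow_iff_left₀ h1 h2 two_ne_zero).mp hsq

lemma sqrt_ineq_aux (a t : ℝ) (ha0 : 0 ≤ a) (ha1 : a ≤ 1) (ht : 0 ≤ t) :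
    a * Real.sqrt (t + 4) ≤ Real.sqrt (t + 4 * a ^ 2) := by
  have e : a * Real.sqrt (t + 4) = Real.sqrt (a ^ 2 * (t + 4)) := by
    rw [Real.sqrt_mul (sq_nonneg a), Real.sqrt_sq ha0]
  rw [e]
  apply Real.sqrt_le_sqrt
  nlinarith [mul_nonneg (mul_nonneg ht (by linarith : (0:ℝ) ≤ 1 - a)) (by linarith : (0:ℝ) ≤ 1 + a)]

/-- Lemma 5 of the paper: `tanh(ρ_K(w₁,w₂)/2) ≤ 2C·F(r)·s_K(w₁,w₂)` where
`F(r) = √2·r/((1+r²)·B(r))`. -/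
theorem stmt6 (a r u₁ u₂ : ℝ) (z₁ z₂ : ℂ)
    (ha : 0 < a) (ha1 : a < 1) (hr : r ∈ Ioo (0 : ℝ) 1)
    (har : Real.sqrt 2 * Csq * a = Bint r)
    (h₁ : u₁ ∈ Icc (-a) a) (h₂ : u₂ ∈ Icc (-a) a)
    (h : |u₁ + u₂| ≤ a ^ 2 + u₁ * u₂)
    (hz₁ : ‖z₁‖ < 1) (hz₂ : ‖z₂‖ < 1) (hne : z₁ ≠ z₂)
    (hw₁ : fSq z₁ = (u₁ : ℂ) - a * I) (hw₂ : fSq z₂ = (u₂ : ℂ) + a * I)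
    (hz₁r : ‖z₁‖ ≤ r) (hz₂r : ‖z₂‖ ≤ r) :
    ‖z₁ - z₂‖ / ‖1 - z₁ * (starRingEnd ℂ) z₂‖ ≤
      2 * Csq * (Real.sqrt 2 * r / ((1 + r ^ 2) * Bint r)) *
        sK ((u₁ : ℂ) - a * I) ((u₂ : ℂ) + a * I) := by
  obtain ⟨hr0, hr1⟩ := hr
  obtain ⟨hu₁l, hu₁r⟩ := h₁
  obtain ⟨hu₂l, hu₂r⟩ := h₂
  have hCpos := Csq_pos
  have hBr : Bint r = Real.sqrt 2 * Csq * a := har.symm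
  have hs2 : (0:ℝ) < Real.sqrt 2 := by positivity
  set w₁ : ℂ := (u₁ : ℂ) - a * I with hw1def
  set w₂ : ℂ := (u₂ : ℂ) + a * I with hw2def
  have hw₁re : w₁.re = u₁ := by simp [hw1def]
  have hw₁im : w₁.im = -a := by simp [hw1def]
  have hw₂re : w₂.re = u₂ := by simp [hw2def]
  have hw₂im : w₂.im = a := by simp [hw2def]
  -- the closed square
  set s : Set ℂ := {z : ℂ | z.re ∈ Icc (-1 : ℝ) 1 ∧ z.im ∈ Icc (-1 : ℝ) 1} with hsdef
  have hclosed : IsClosed s :=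
    (isClosed_Icc.preimage Complex.continuous_re).inter
      (isClosed_Icc.preimage Complex.continuous_im)
  set U : Set ℂ := {z : ℂ | z.re ∈ Ioo (-1 : ℝ) 1 ∧ z.im ∈ Ioo (-1 : ℝ) 1} with hUdef
  have hUopen : IsOpen U :=
    (isOpen_Ioo.preimage Complex.continuous_re).inter
      (isOpen_Ioo.preimage Complex.continuous_im)
  have hUsub : U ⊆ s := fun z hz =>
    ⟨⟨hz.1.1.le, hz.1.2.le⟩, ⟨hz.2.1.le, hz.2.2.le⟩⟩
  -- the boundary point z₀
  have hlow : -a ≤ u₁ + (u₂ - u₁) * (1 - a) / 2 := by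
    nlinarith [mul_nonneg (by linarith : (0:ℝ) ≤ u₁ + a) (by linarith : (0:ℝ) ≤ 1 + a),
      mul_nonneg (by linarith : (0:ℝ) ≤ u₂ + a) (by linarith : (0:ℝ) ≤ 1 - a)]
  have hhigh : u₁ + (u₂ - u₁) * (1 - a) / 2 ≤ a := by
    nlinarith [mul_nonneg (by linarith : (0:ℝ) ≤ a - u₁) (by linarith : (0:ℝ) ≤ 1 + a),
      mul_nonneg (by linarith : (0:ℝ) ≤ a - u₂) (by linarith : (0:ℝ) ≤ 1 - a)]
  set x₀ : ℝ := u₁ + (u₂ - u₁) * (1 - a) / 2 with hx₀def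
  have hx₀a : |x₀| ≤ a := abs_le.mpr ⟨hlow, hhigh⟩
  set z₀ : ℂ := (x₀ : ℂ) - I with hz₀def
  have hz₀re : z₀.re = x₀ := by simp [hz₀def]
  have hz₀im : z₀.im = -1 := by simp [hz₀def]
  have hz₀s : z₀ ∈ s := by
    have hx := abs_le.mp hx₀a
    simp only [hsdef, Set.mem_setOf_eq, Set.mem_Icc, hz₀re, hz₀im]
    refine ⟨⟨?_, ?_⟩, ?_, ?_⟩ <;> linarith [hx.1, hx.2]
  have hz₀ni : z₀ ∉ interior s := by
    intro hmem
    rw [mem_interior_iff_mem_nhds, Metric.mem_nhds_iff] at hmem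
    obtain ⟨ε, hε, hball⟩ := hmem
    have hmemball : z₀ - (ε/2 : ℝ) * I ∈ Metric.ball z₀ ε := by
      rw [Metric.mem_ball]
      have : dist (z₀ - (ε/2 : ℝ) * I) z₀ = ‖(-(ε/2 : ℝ)) * I‖ := by
        rw [Complex.dist_eq]
        congr 1
        push_cast
        ring
      rw [this]
      simp only [norm_mul, norm_neg, Complex.norm_real, Real.norm_eq_abs, Complex.norm_I, mul_one]
      rw [_root_.abs_of_pos (by linarith : (0:ℝ) < ε/2)]
      linarith
    have := (hball hmemball).2.1
    have him : (z₀ - (ε/2 : ℝ) * I).im = -1 - ε/2 := by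
      simp [hz₀def]
    rw [him] at this
    linarith
  have hz₀bd : z₀ ∈ bdryK := by
    rw [bdryK]
    rw [hclosed.frontier_eq]
    exact ⟨hz₀s, hz₀ni⟩
  -- distances to z₀
  have hRnn : (0:ℝ) ≤ (u₁ - u₂) ^ 2 + 4 := by positivity
  have d1 : dist w₁ z₀ = (1 - a) / 2 * Real.sqrt ((u₁ - u₂) ^ 2 + 4) := by
    rw [Complex.dist_eq_re_im, hw₁re, hw₁im, hz₀re, hz₀im]
    have : (u₁ - x₀) ^ 2 + (-a - -1) ^ 2 = ((1 - a) / 2) ^ 2 * ((u₁ - u₂) ^ 2 + 4) := by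
      rw [hx₀def]; ring
    rw [this, Real.sqrt_mul (sq_nonneg _), Real.sqrt_sq (by linarith : (0:ℝ) ≤ (1 - a) / 2)]
  have d2 : dist z₀ w₂ = (1 + a) / 2 * Real.sqrt ((u₁ - u₂) ^ 2 + 4) := by
    rw [Complex.dist_eq_re_im, hw₂re, hw₂im, hz₀re, hz₀im]
    have : (x₀ - u₂) ^ 2 + (-1 - a) ^ 2 = ((1 + a) / 2) ^ 2 * ((u₁ - u₂) ^ 2 + 4) := by
      rw [hx₀def]; ring
    rw [this, Real.sqrt_mul (sq_nonneg _), Real.sqrt_sq (by linarith : (0:ℝ) ≤ (1 + a) / 2)]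
  set S : ℝ := sInf ((fun z => dist w₁ z + dist z w₂) '' bdryK) with hSdef
  have hbdd : BddBelow ((fun z => dist w₁ z + dist z w₂) '' bdryK) := by
    refine ⟨0, ?_⟩
    rintro y ⟨z, _, rfl⟩
    positivity
  have hS_le : S ≤ Real.sqrt ((u₁ - u₂) ^ 2 + 4) := by
    have hmem : Real.sqrt ((u₁ - u₂) ^ 2 + 4) ∈ (fun z => dist w₁ z + dist z w₂) '' bdryK := by
      refine ⟨z₀, hz₀bd, ?_⟩
      show dist w₁ z₀ + dist z₀ w₂ = _
      rw [d1, d2]; ring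
    exact csInf_le hbdd hmem
  have hS_ge : 1 - a ≤ S := by
    apply le_csInf ⟨_, Set.mem_image_of_mem _ hz₀bd⟩
    rintro y ⟨z, hz, rfl⟩
    show 1 - a ≤ dist w₁ z + dist z w₂
    rw [bdryK, hclosed.frontier_eq] at hz
    obtain ⟨hzs, hzni⟩ := hz
    simp only [hsdef, Set.mem_setOf_eq, Set.mem_Icc] at hzs
    have hzU : z ∉ U := fun hU => hzni (interior_maximal hUsub hUopen hU)
    have hd1 : 1 - a ≤ dist w₁ z := by
      have hre := Complex.abs_re_le_norm (w₁ - z)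
      have him := Complex.abs_im_le_norm (w₁ - z)
      rw [Complex.sub_re, hw₁re] at hre
      rw [Complex.sub_im, hw₁im] at him
      rw [Complex.dist_eq]
      -- z is on the boundary: re = ±1 or im = ±1
      have hcase : z.re = -1 ∨ z.re = 1 ∨ z.im = -1 ∨ z.im = 1 := by
        by_contra hcon
        push_neg at hcon
        apply hzU
        obtain ⟨⟨hre1, hre2⟩, him1, him2⟩ := hzs
        exact ⟨⟨lt_of_le_of_ne hre1 (Ne.symm (by tauto)), lt_of_le_of_ne hre2 (by tauto)⟩,
          ⟨lt_of_le_of_ne him1 (Ne.symm (by tauto)), lt_of_le_of_ne him2 (by tauto)⟩⟩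
      rcases hcase with hc | hc | hc | hc
      · rw [hc] at hre
        have : 1 - a ≤ |u₁ - -1| := by rw [_root_.abs_of_nonneg (by linarith)]; linarith
        linarith [this.trans hre]
      · rw [hc] at hre
        have : 1 - a ≤ |u₁ - 1| := by rw [_root_.abs_of_nonpos (by linarith)]; linarith
        linarith [this.trans hre]
      · rw [hc] at him
        have : 1 - a ≤ |-a - -1| := by rw [_root_.abs_of_nonneg (by linarith)]; linarith
        linarith [this.trans him]
      · rw [hc] at him
        have : 1 - a ≤ |-a - 1| := by rw [_root_.abs_of_nonpos (by linarith)]; linarith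
        linarith [this.trans him]
    have := dist_nonneg (x := z) (y := w₂)
    linarith
  have hSpos : 0 < S := by linarith
  -- dist w₁ w₂
  have hD : dist w₁ w₂ = Real.sqrt ((u₁ - u₂) ^ 2 + 4 * a ^ 2) := by
    rw [Complex.dist_eq_re_im, hw₁re, hw₁im, hw₂re, hw₂im]
    congr 1
    ring
  have haS : a * Real.sqrt ((u₁ - u₂) ^ 2 + 4) ≤ Real.sqrt ((u₁ - u₂) ^ 2 + 4 * a ^ 2) :=
    sqrt_ineq_aux a _ ha.le ha1.le (sq_nonneg _)
  have hsK : a ≤ sK w₁ w₂ := by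
    have hsKeq : sK w₁ w₂ = dist w₁ w₂ / S := rfl
    rw [hsKeq, le_div_iff₀ hSpos, hD]
    calc a * S ≤ a * Real.sqrt ((u₁ - u₂) ^ 2 + 4) := by
          exact mul_le_mul_of_nonneg_left hS_le ha.le
      _ ≤ _ := haS
  -- put everything together
  have hcoef : 2 * Csq * (Real.sqrt 2 * r / ((1 + r ^ 2) * Bint r)) = 2 * r / ((1 + r ^ 2) * a) := by
    rw [hBr]
    field_simp
  rw [hcoef]
  have hmain := pseudo_bound r z₁ z₂ hr0 hr1 hz₁r hz₂r
  calc ‖z₁ - z₂‖ / ‖1 - z₁ * (starRingEnd ℂ) z₂‖ ≤ 2 * r / (1 + r ^ 2) := hmain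
    _ = 2 * r / ((1 + r ^ 2) * a) * a := by
        field_simp
    _ ≤ 2 * r / ((1 + r ^ 2) * a) * sK w₁ w₂ := by
        apply mul_le_mul_of_nonneg_left hsK
        positivity
end
end

section
/- In the setting of the previous lemma, assume in addition that a ≥ a₀, where a₀ = B(r₀)/(√2·C) with r₀ = 0.625623. That is: let u₁, u₂ ∈ [−a,a] with |u₁ + u₂| ≤ a² + u₁u₂, w₁ = u₁ − i·a, w₂ = u₂ + i·a with a₀ ≤ a < 1, √2·C·a = B(r), and z₁ ≠ z₂ in D with f(z_k) = w_k and |z_k| ≤ r for k = 1,2. Then |z₁ − z₂|/|1 − z₁·conj(z₂)| ≤ 2C · s_K(w₁,w₂). -/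
open Complex Set Real

noncomputable section

/-! ### Auxiliary lemmas -/

lemma contBi {x y : ℝ} (h0 : 0 ≤ x) (hxy : x ≤ y) (hy : y < 1) :
    IntervalIntegrable (fun t => 1 / Real.sqrt (1 - t ^ 4)) MeasureTheory.volume x y := by
  apply ContinuousOn.intervalIntegrable
  have hcont : Continuous fun t : ℝ => Real.sqrt (1 - t ^ 4) :=
    Real.continuous_sqrt.comp (by continuity)
  apply ContinuousOn.div continuousOn_const hcont.continuousOn
  intro t ht
  rw [Set.uIcc_of_le hxy] at ht
  have ht0 : 0 ≤ t := le_trans h0 ht.1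
  have h1 : t ^ 4 < 1 :=
    lt_of_le_of_lt (pow_le_pow_left₀ ht0 ht.2 4) (pow_lt_one₀ (le_trans ht0 ht.2) hy (by norm_num))
  have : 0 < Real.sqrt (1 - t ^ 4) := Real.sqrt_pos.mpr (by linarith)
  exact ne_of_gt this

lemma B_gap {x y : ℝ} (h0 : 0 ≤ x) (hxy : x ≤ y) (hy : y < 1) :
    Bint x + (y - x) ≤ Bint y := by
  have hI1 : IntervalIntegrable (fun t => 1 / Real.sqrt (1 - t ^ 4)) MeasureTheory.volume 0 x :=
    contBi le_rfl h0 (lt_of_le_of_lt hxy hy)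
  have hI2 : IntervalIntegrable (fun t => 1 / Real.sqrt (1 - t ^ 4)) MeasureTheory.volume x y :=
    contBi h0 hxy hy
  have hsplit : Bint x + (∫ t in x..y, 1 / Real.sqrt (1 - t ^ 4)) = Bint y :=
    intervalIntegral.integral_add_adjacent_intervals hI1 hI2
  have hmono : (y - x) ≤ ∫ t in x..y, 1 / Real.sqrt (1 - t ^ 4) := by
    have h1 : (∫ _t in x..y, (1:ℝ)) ≤ ∫ t in x..y, 1 / Real.sqrt (1 - t ^ 4) := by
      apply intervalIntegral.integral_mono_on hxy intervalIntegrable_const hI2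
      intro t ht
      have ht0 : 0 ≤ t := le_trans h0 ht.1
      have ht4 : t ^ 4 < 1 :=
        lt_of_le_of_lt (pow_le_pow_left₀ ht0 ht.2 4)
          (pow_lt_one₀ (le_trans ht0 ht.2) hy (by norm_num))
      have hs : 0 < Real.sqrt (1 - t ^ 4) := Real.sqrt_pos.mpr (by linarith)
      rw [le_div_iff₀ hs, one_mul]
      exact Real.sqrt_le_one.mpr (by nlinarith [pow_nonneg ht0 4])
    simpa using h1
  linarith

lemma Bpoly {y : ℝ} (h0 : 0 ≤ y) (hy : y < 1) :
    y + y^5/10 + y^9/24 + (5/208)*y^13 + (35/2176)*y^17 + (3/256)*y^21 ≤ Bint y := by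
  have hg : ∀ t : ℝ, HasDerivAt
      (fun t : ℝ => t + t^5/10 + t^9/24 + (5/208)*t^13 + (35/2176)*t^17 + (3/256)*t^21)
      (1 + t^4/2 + (3/8)*t^8 + (5/16)*t^12 + (35/128)*t^16 + (63/256)*t^20) t := by
    intro t
    have h1 : HasDerivAt (fun t : ℝ => t) 1 t := hasDerivAt_id t
    have h5 : HasDerivAt (fun t : ℝ => t^5) (5 * t^4) t := by simpa using hasDerivAt_pow 5 t
    have h9 : HasDerivAt (fun t : ℝ => t^9) (9 * t^8) t := by simpa using hasDerivAt_pow 9 t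
    have h13 : HasDerivAt (fun t : ℝ => t^13) (13 * t^12) t := by simpa using hasDerivAt_pow 13 t
    have h17 : HasDerivAt (fun t : ℝ => t^17) (17 * t^16) t := by simpa using hasDerivAt_pow 17 t
    have h21 : HasDerivAt (fun t : ℝ => t^21) (21 * t^20) t := by simpa using hasDerivAt_pow 21 t
    have h := ((((h1.add (h5.div_const 10)).add (h9.div_const 24)).add
      (h13.const_mul (5/208:ℝ))).add (h17.const_mul (35/2176:ℝ))).add (h21.const_mul (3/256:ℝ))
    exact h.congr_deriv (by ring)
  have hgc : Continuous (fun t : ℝ =>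
      1 + t^4/2 + (3/8)*t^8 + (5/16)*t^12 + (35/128)*t^16 + (63/256)*t^20) := by continuity
  have heq : (∫ t in (0:ℝ)..y,
      (1 + t^4/2 + (3/8)*t^8 + (5/16)*t^12 + (35/128)*t^16 + (63/256)*t^20))
      = y + y^5/10 + y^9/24 + (5/208)*y^13 + (35/2176)*y^17 + (3/256)*y^21 := by
    rw [intervalIntegral.integral_eq_sub_of_hasDerivAt (fun t _ => hg t)
      (hgc.intervalIntegrable 0 y)]
    norm_num
  have hmono : (∫ t in (0:ℝ)..y,
      (1 + t^4/2 + (3/8)*t^8 + (5/16)*t^12 + (35/128)*t^16 + (63/256)*t^20)) ≤ Bint y := by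
    apply intervalIntegral.integral_mono_on h0 (hgc.intervalIntegrable 0 y) (contBi le_rfl h0 hy)
    intro t ht
    have ht0 : 0 ≤ t := ht.1
    have ht4 : t ^ 4 < 1 :=
      lt_of_le_of_lt (pow_le_pow_left₀ ht0 ht.2 4) (pow_lt_one₀ (le_trans ht0 ht.2) hy (by norm_num))
    have hs : 0 < Real.sqrt (1 - t ^ 4) := Real.sqrt_pos.mpr (by linarith)
    rw [le_div_iff₀ hs]
    set g := 1 + t^4/2 + (3/8)*t^8 + (5/16)*t^12 + (35/128)*t^16 + (63/256)*t^20 with hgdef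
    have hg0 : 0 ≤ g := by positivity
    have hsq : (g * Real.sqrt (1 - t^4))^2 = g^2 * (1 - t^4) := by
      rw [mul_pow, Real.sq_sqrt (by linarith)]
    have hkey : g^2 * (1 - t^4) ≤ 1 := by
      rw [hgdef]
      nlinarith [pow_nonneg ht0 24, pow_nonneg ht0 28, pow_nonneg ht0 32,
        pow_nonneg ht0 36, pow_nonneg ht0 40, pow_nonneg ht0 44]
    nlinarith [mul_nonneg hg0 (Real.sqrt_nonneg (1 - t^4)), hsq, hkey]
  linarith [heq ▸ hmono]

lemma key_const : 2 * (0.625623:ℝ) ≤ Real.sqrt 2 *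
    ((0.625623 + 0.625623^5/10 + 0.625623^9/24 + (5/208)*0.625623^13
      + (35/2176)*0.625623^17 + (3/256)*0.625623^21) * (1 + 0.625623^2)) := by
  set q : ℝ := (0.625623 + 0.625623^5/10 + 0.625623^9/24 + (5/208)*0.625623^13
      + (35/2176)*0.625623^17 + (3/256)*0.625623^21) * (1 + 0.625623^2) with hq
  have h2 : ((2:ℝ) * 0.625623)^2 ≤ 2 * q^2 := by rw [hq]; norm_num
  have hq0 : (0:ℝ) ≤ q := by rw [hq]; norm_num
  have e : Real.sqrt 2 * q = Real.sqrt (2 * q^2) := by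
    rw [Real.sqrt_mul (by norm_num), Real.sqrt_sq hq0]
  rw [e]
  exact (Real.le_sqrt (by norm_num) (by positivity)).mpr h2

lemma disc_bound {z₁ z₂ : ℂ} {r : ℝ} (hr0 : 0 < r) (hr1 : r < 1)
    (h1 : ‖z₁‖ ≤ r) (h2 : ‖z₂‖ ≤ r) :
    ‖z₁ - z₂‖ / ‖1 - z₁ * (starRingEnd ℂ) z₂‖ ≤ 2 * r / (1 + r ^ 2) := by
  have hid : Complex.normSq (1 - z₁ * (starRingEnd ℂ) z₂)
      = Complex.normSq (z₁ - z₂) + (1 - Complex.normSq z₁) * (1 - Complex.normSq z₂) := by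
    simp [Complex.normSq_apply, Complex.mul_re, Complex.mul_im, Complex.sub_re, Complex.sub_im]
    ring
  have e1 : ‖1 - z₁ * (starRingEnd ℂ) z₂‖ ^ 2 = Complex.normSq (1 - z₁ * (starRingEnd ℂ) z₂) := by
    rw [Complex.sq_norm]
  have e2 : ‖z₁ - z₂‖ ^ 2 = Complex.normSq (z₁ - z₂) := by
    rw [Complex.sq_norm]
  have e3 : ‖z₁‖ ^ 2 = Complex.normSq z₁ := by rw [Complex.sq_norm]
  have e4 : ‖z₂‖ ^ 2 = Complex.normSq z₂ := by rw [Complex.sq_norm]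
  set N := ‖1 - z₁ * (starRingEnd ℂ) z₂‖
  set M := ‖z₁ - z₂‖
  have hNsq : N ^ 2 = M ^ 2 + (1 - ‖z₁‖ ^ 2) * (1 - ‖z₂‖ ^ 2) := by
    rw [e1, e2, e3, e4, hid]
  have hn1 : ‖z₁‖ ^ 2 ≤ r ^ 2 := by nlinarith [norm_nonneg z₁]
  have hn2 : ‖z₂‖ ^ 2 ≤ r ^ 2 := by nlinarith [norm_nonneg z₂]
  have hr2 : (0:ℝ) < 1 - r ^ 2 := by nlinarith
  have hfac : (1 - r ^ 2) * (1 - r ^ 2) ≤ (1 - ‖z₁‖ ^ 2) * (1 - ‖z₂‖ ^ 2) :=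
    mul_le_mul (by linarith) (by linarith) (by linarith) (by linarith)
  have hN0 : 0 < N := by
    nlinarith [norm_nonneg (1 - z₁ * (starRingEnd ℂ) z₂), sq_nonneg M,
      mul_pos hr2 hr2]
  have hM2r : M ≤ 2 * r := le_trans (norm_sub_le z₁ z₂) (by linarith)
  have hM0 : 0 ≤ M := norm_nonneg _
  rw [div_le_div_iff₀ hN0 (by positivity)]
  have hsq : (M * (1 + r ^ 2)) ^ 2 ≤ (2 * r * N) ^ 2 := by
    nlinarith [sq_nonneg (1 - r ^ 2), mul_le_mul hM2r hM2r hM0 (by positivity : (0:ℝ) ≤ 2 * r),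
      mul_pos hr0 hr0, sq_nonneg M, mul_le_mul_of_nonneg_left hfac
        (by positivity : (0:ℝ) ≤ 4 * r ^ 2)]
  nlinarith [mul_pos (mul_pos two_pos hr0) hN0]

lemma sK_ge {a u₁ u₂ : ℝ} (ha0 : 0 < a) (ha1 : a < 1) (hu1 : |u₁| ≤ a) :
    a ≤ sK ((u₁ : ℂ) - a * I) ((u₂ : ℂ) + a * I) := by
  set w₁ : ℂ := (u₁ : ℂ) - a * I
  set w₂ : ℂ := (u₂ : ℂ) + a * I
  set z₀ : ℂ := (u₁ : ℂ) - I
  have hu1' : -1 < u₁ ∧ u₁ < 1 := by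
    rw [abs_le] at hu1; constructor <;> linarith [hu1.1, hu1.2]
  have hz₀ : z₀ ∈ bdryK := by
    have hset : {z : ℂ | z.re ∈ Icc (-1 : ℝ) 1 ∧ z.im ∈ Icc (-1 : ℝ) 1}
        = Icc (-1 : ℝ) 1 ×ℂ Icc (-1 : ℝ) 1 := rfl
    rw [bdryK, hset, frontier_reProdIm, closure_Icc, frontier_Icc (by norm_num : (-1:ℝ) ≤ 1)]
    left
    rw [mem_reProdIm]
    constructor
    · simp [z₀]
      constructor <;> linarith [hu1'.1, hu1'.2]
    · simp [z₀]
  set v : ℝ := u₁ - u₂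
  have hdw : dist w₁ w₂ = Real.sqrt (v ^ 2 + (2 * a) ^ 2) := by
    rw [Complex.dist_eq_re_im]
    congr 1
    simp [w₁, w₂, v]
    ring
  have hd1 : dist w₁ z₀ = 1 - a := by
    rw [Complex.dist_eq_re_im]
    have : ((w₁.re - z₀.re) ^ 2 + (w₁.im - z₀.im) ^ 2) = (1 - a) ^ 2 := by
      simp [w₁, z₀]
      ring
    rw [this, Real.sqrt_sq (by linarith)]
  have hd2 : dist z₀ w₂ = Real.sqrt (v ^ 2 + (1 + a) ^ 2) := by
    rw [Complex.dist_eq_re_im]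
    congr 1
    simp [z₀, w₂, v]
    ring
  set s : ℝ := Real.sqrt (v ^ 2 + (1 + a) ^ 2)
  set d : ℝ := Real.sqrt (v ^ 2 + (2 * a) ^ 2)
  have hs2 : s ^ 2 = v ^ 2 + (1 + a) ^ 2 := Real.sq_sqrt (by positivity)
  have hd2' : d ^ 2 = v ^ 2 + (2 * a) ^ 2 := Real.sq_sqrt (by positivity)
  have hs0 : 0 ≤ s := Real.sqrt_nonneg _
  have hd0 : 0 ≤ d := Real.sqrt_nonneg _
  have step1 : 2 * a ^ 2 * s ≤ (1 + a) * (v ^ 2 + 2 * a ^ 2) := by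
    have h1 : (2 * a ^ 2 * s) ^ 2 ≤ ((1 + a) * (v ^ 2 + 2 * a ^ 2)) ^ 2 := by
      nlinarith [hs2, sq_nonneg v, sq_nonneg (a * v), sq_nonneg (v * v), sq_nonneg a,
        mul_pos ha0 ha0, sq_nonneg (a * a)]
    nlinarith [mul_nonneg (mul_nonneg (by norm_num : (0:ℝ) ≤ 2) (sq_nonneg a)) hs0,
      mul_nonneg (by positivity : (0:ℝ) ≤ (1+a)) (by positivity : (0:ℝ) ≤ v^2 + 2*a^2)]
  have step2 : (a * ((1 - a) + s)) ^ 2 ≤ d ^ 2 := by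
    nlinarith [mul_le_mul_of_nonneg_left step1 (by linarith : (0:ℝ) ≤ 1 - a)]
  have step3 : a * ((1 - a) + s) ≤ d := by
    nlinarith [step2, hd0, mul_nonneg ha0.le (by linarith : (0:ℝ) ≤ (1 - a) + s)]
  set T : Set ℝ := (fun z => dist w₁ z + dist z w₂) '' bdryK
  have hTne : T.Nonempty := ⟨_, ⟨z₀, hz₀, rfl⟩⟩
  have hTbdd : BddBelow T := by
    refine ⟨0, fun x hx => ?_⟩
    obtain ⟨z, _, rfl⟩ := hx
    positivity
  have hmem : (1 - a) + s ∈ T := ⟨z₀, hz₀, by simp only []; rw [hd1, hd2]⟩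
  have hinf_le : sInf T ≤ (1 - a) + s := csInf_le hTbdd hmem
  have hd_pos : 0 < d := Real.sqrt_pos.mpr (by positivity)
  have hinf_pos : 0 < sInf T := by
    have hlb : ∀ x ∈ T, d ≤ x := by
      rintro x ⟨z, _, rfl⟩
      calc d = dist w₁ w₂ := hdw.symm
      _ ≤ dist w₁ z + dist z w₂ := dist_triangle _ _ _
    linarith [le_csInf hTne hlb]
  rw [sK, hdw, le_div_iff₀ hinf_pos]
  calc a * sInf T ≤ a * ((1 - a) + s) := mul_le_mul_of_nonneg_left hinf_le ha0.le
  _ ≤ d := by linarith [step3]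

set_option maxHeartbeats 1600000 in
/-- Corollary 2 of the paper: in the setting of Lemma 5, if moreover
`a ≥ a₀ = B(r₀)/(√2·C)` with `r₀ = 0.625623`, then
`tanh(ρ_K(w₁,w₂)/2) ≤ 2C·s_K(w₁,w₂)`. -/
theorem stmt7 (a r u₁ u₂ : ℝ) (z₁ z₂ : ℂ)
    (ha0 : Bint 0.625623 / (Real.sqrt 2 * Csq) ≤ a) (ha1 : a < 1)
    (hr : r ∈ Ioo (0 : ℝ) 1)
    (har : Real.sqrt 2 * Csq * a = Bint r)
    (h₁ : u₁ ∈ Icc (-a) a) (h₂ : u₂ ∈ Icc (-a) a)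
    (h : |u₁ + u₂| ≤ a ^ 2 + u₁ * u₂)
    (hz₁ : ‖z₁‖ < 1) (hz₂ : ‖z₂‖ < 1) (hne : z₁ ≠ z₂)
    (hw₁ : fSq z₁ = (u₁ : ℂ) - a * I) (hw₂ : fSq z₂ = (u₂ : ℂ) + a * I)
    (hz₁r : ‖z₁‖ ≤ r) (hz₂r : ‖z₂‖ ≤ r) :
    ‖z₁ - z₂‖ / ‖1 - z₁ * (starRingEnd ℂ) z₂‖ ≤
      2 * Csq * sK ((u₁ : ℂ) - a * I) ((u₂ : ℂ) + a * I) := by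
  obtain ⟨hr0, hr1⟩ := hr
  have hCpos : 0 < Csq := Csq_pos
  have hsCpos : 0 < Real.sqrt 2 * Csq := by positivity
  have hBr0_le : Bint 0.625623 ≤ Bint r := by
    have hmul : Bint 0.625623 ≤ Real.sqrt 2 * Csq * a := by
      rw [show Real.sqrt 2 * Csq * a = a * (Real.sqrt 2 * Csq) by ring]
      exact (div_le_iff₀ hsCpos).mp ha0
    rw [har] at hmul
    exact hmul
  -- r ≥ r₀
  have hr₀r : (0.625623 : ℝ) ≤ r := by
    by_contra hlt
    push_neg at hlt
    have := B_gap (le_of_lt hr0) (le_of_lt hlt) (by norm_num : (0.625623:ℝ) < 1)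
    linarith
  -- a > 0
  have hBint0 : Bint 0 = 0 := intervalIntegral.integral_same
  have hBr_pos : r ≤ Bint r := by
    have := B_gap (le_refl (0:ℝ)) (le_of_lt hr0) hr1
    rw [hBint0] at this
    linarith
  have ha_pos : 0 < a := by
    by_contra hle
    push_neg at hle
    have hnp : Real.sqrt 2 * Csq * a ≤ 0 := mul_nonpos_of_nonneg_of_nonpos hsCpos.le hle
    rw [har] at hnp
    linarith
  -- make the polynomial value opaque
  obtain ⟨p, hplb, hkey, hple⟩ : ∃ p : ℝ, 0.6 ≤ p ∧
      2 * (0.625623:ℝ) ≤ Real.sqrt 2 * (p * (1 + 0.625623 ^ 2)) ∧ p ≤ Bint 0.625623 :=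
    ⟨_, by norm_num, key_const, Bpoly (by norm_num) (by norm_num)⟩
  have hBlow : p + (r - 0.625623) ≤ Bint r := by
    have hgap := B_gap (by norm_num : (0:ℝ) ≤ 0.625623) hr₀r hr1
    linarith
  have hs2lb : (1.414 : ℝ) ≤ Real.sqrt 2 :=
    (Real.le_sqrt (by norm_num) (by norm_num)).mpr (by norm_num)
  have hs2nn : (0:ℝ) ≤ Real.sqrt 2 := Real.sqrt_nonneg 2
  have hmain : 2 * r / (1 + r ^ 2) ≤ Real.sqrt 2 * Bint r := by
    rw [div_le_iff₀ (by positivity)]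
    have hstep : Real.sqrt 2 * (p + (r - 0.625623)) * (1 + r ^ 2) ≤
        Real.sqrt 2 * Bint r * (1 + r ^ 2) :=
      mul_le_mul_of_nonneg_right (mul_le_mul_of_nonneg_left hBlow hs2nn) (by positivity)
    have hD : (0:ℝ) ≤ r - 0.625623 := by linarith
    have hr2 : (0.625623:ℝ) ^ 2 ≤ r ^ 2 := by nlinarith
    have hrest : 2 * (r - 0.625623) ≤
        Real.sqrt 2 * (p * (r ^ 2 - 0.625623 ^ 2) + (r - 0.625623) * (1 + r ^ 2)) := by
      have e2 : 0.6 * (r ^ 2 - 0.625623 ^ 2) + (r - 0.625623) * (1 + 0.625623 ^ 2)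
          ≤ p * (r ^ 2 - 0.625623 ^ 2) + (r - 0.625623) * (1 + r ^ 2) := by
        nlinarith [mul_le_mul_of_nonneg_right hplb (by linarith : (0:ℝ) ≤ r^2 - 0.625623^2),
          mul_le_mul_of_nonneg_left hr2 hD]
      have e3 : (0:ℝ) ≤ 0.6 * (r ^ 2 - 0.625623 ^ 2)
          + (r - 0.625623) * (1 + 0.625623 ^ 2) := by nlinarith
      nlinarith [mul_le_mul_of_nonneg_left e2 hs2nn,
        mul_le_mul_of_nonneg_right hs2lb e3]
    have hgoal : 2 * r ≤ Real.sqrt 2 * (p + (r - 0.625623)) * (1 + r ^ 2) := by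
      have hexp : Real.sqrt 2 * (p + (r - 0.625623)) * (1 + r ^ 2)
          = Real.sqrt 2 * (p * (1 + 0.625623 ^ 2))
            + Real.sqrt 2 * (p * (r ^ 2 - 0.625623 ^ 2) + (r - 0.625623) * (1 + r ^ 2)) := by
        ring
      rw [hexp]
      linarith
    linarith
  -- 2·Csq·a = √2 · Bint r
  have h2Ca : 2 * Csq * a = Real.sqrt 2 * Bint r := by
    rw [← har, show Real.sqrt 2 * (Real.sqrt 2 * Csq * a)
      = (Real.sqrt 2 * Real.sqrt 2) * (Csq * a) by ring, Real.mul_self_sqrt (by norm_num)]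
    ring
  -- assemble
  have hu1 : |u₁| ≤ a := abs_le.mpr ⟨h₁.1, h₁.2⟩
  have hsK : a ≤ sK ((u₁ : ℂ) - a * I) ((u₂ : ℂ) + a * I) := sK_ge ha_pos ha1 hu1
  calc ‖z₁ - z₂‖ / ‖1 - z₁ * (starRingEnd ℂ) z₂‖
      ≤ 2 * r / (1 + r ^ 2) := disc_bound hr0 hr1 hz₁r hz₂r
  _ ≤ Real.sqrt 2 * Bint r := hmain
  _ = 2 * Csq * a := h2Ca.symm
  _ ≤ 2 * Csq * sK ((u₁ : ℂ) - a * I) ((u₂ : ℂ) + a * I) :=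
      mul_le_mul_of_nonneg_left hsK (by positivity)
end
end

section
/- Let B(r) = ∫₀^r dt/√(1−t⁴) and r₀ = 0.625623. For every r with r₀ ≤ r < 1, one has √2·r/(1+r²) < B(r); equivalently, F(r) = √2·r/((1+r²)·B(r)) satisfies F(r) < 1 on [r₀, 1). -/
open Complex Set Real

noncomputable section

/-- Auxiliary multiplication lemma. -/
lemma auxmul8 (r a : ℝ) (k : ℕ) (hr : 0 ≤ r) (hp : a ≤ r ^ k) : a * r ≤ r ^ (k + 1) := by
  calc a * r ≤ r ^ k * r := mul_le_mul_of_nonneg_right hp hr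
    _ = r ^ (k + 1) := (pow_succ r k).symm

/-- For `r₀ = 0.625623 ≤ r < 1` one has `√2·r/(1+r²) < B(r)`, i.e. `F(r) < 1`. -/
theorem stmt8 (r : ℝ) (hr0 : (0.625623 : ℝ) ≤ r) (hr1 : r < 1) :
    Real.sqrt 2 * r / (1 + r ^ 2) < Bint r := by
  have hrp : (0:ℝ) < r := lt_of_lt_of_le (by norm_num) hr0
  -- the polynomial lower bound for the integrand
  have hpt : ∀ t ∈ Icc (0:ℝ) r,
      (1 + t^4/2 + 3*t^8/8 + 5*t^12/16 + 35*t^16/128 + 63*t^20/256)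
        ≤ 1 / Real.sqrt (1 - t ^ 4) := by
    intro t ht
    have h0 : 0 ≤ t := ht.1
    have hx : 0 < 1 - t ^ 4 := by
      have : t ^ 4 < 1 := pow_lt_one₀ h0 (lt_of_le_of_lt ht.2 hr1) (by norm_num)
      linarith
    set S : ℝ := 1 + t^4/2 + 3*t^8/8 + 5*t^12/16 + 35*t^16/128 + 63*t^20/256 with hSdef
    have hSpos : 0 < S := by positivity
    rw [le_div_iff₀ (Real.sqrt_pos.mpr hx)]
    have key : S^2 * (1 - t^4) ≤ 1 := by
      rw [hSdef]
      nlinarith [pow_nonneg h0 24, pow_nonneg h0 28, pow_nonneg h0 32,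
        pow_nonneg h0 36, pow_nonneg h0 40, pow_nonneg h0 44]
    calc S * Real.sqrt (1 - t^4) = Real.sqrt (S^2 * (1 - t^4)) := by
          rw [Real.sqrt_mul (sq_nonneg _), Real.sqrt_sq hSpos.le]
      _ ≤ Real.sqrt 1 := Real.sqrt_le_sqrt key
      _ = 1 := Real.sqrt_one
  -- integrability
  have hSint : IntervalIntegrable
      (fun t : ℝ => 1 + t^4/2 + 3*t^8/8 + 5*t^12/16 + 35*t^16/128 + 63*t^20/256)
      MeasureTheory.volume 0 r := (by fun_prop : Continuous _).intervalIntegrable _ _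
  have hfcont : ContinuousOn (fun t : ℝ => 1 / Real.sqrt (1 - t ^ 4)) (Icc 0 r) := by
    apply ContinuousOn.div continuousOn_const
    · exact (Real.continuous_sqrt.comp (by continuity)).continuousOn
    · intro t ht
      have hx : 0 < 1 - t ^ 4 := by
        have : t ^ 4 < 1 := pow_lt_one₀ ht.1 (lt_of_le_of_lt ht.2 hr1) (by norm_num)
        linarith
      exact ne_of_gt (Real.sqrt_pos.mpr hx)
  have hfint : IntervalIntegrable (fun t : ℝ => 1 / Real.sqrt (1 - t ^ 4))
      MeasureTheory.volume 0 r :=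
    ContinuousOn.intervalIntegrable (by rwa [uIcc_of_le hrp.le])
  -- compare the integrals
  have hmono : (∫ t in (0:ℝ)..r,
      (1 + t^4/2 + 3*t^8/8 + 5*t^12/16 + 35*t^16/128 + 63*t^20/256)) ≤ Bint r :=
    intervalIntegral.integral_mono_on hrp.le hSint hfint hpt
  -- evaluate the polynomial integral
  have heval : (∫ t in (0:ℝ)..r,
      (1 + t^4/2 + 3*t^8/8 + 5*t^12/16 + 35*t^16/128 + 63*t^20/256))
      = r + r^5/10 + r^9/24 + 5*r^13/208 + 35*r^17/2176 + 3*r^21/256 := by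
    have hderiv : ∀ t : ℝ, HasDerivAt
        (fun u : ℝ => u + u^5/10 + u^9/24 + 5*u^13/208 + 35*u^17/2176 + 3*u^21/256)
        (1 + t^4/2 + 3*t^8/8 + 5*t^12/16 + 35*t^16/128 + 63*t^20/256) t := by
      intro t
      have h := (((((hasDerivAt_id t).add ((hasDerivAt_pow 5 t).div_const 10)).add
        ((hasDerivAt_pow 9 t).div_const 24)).add
        (((hasDerivAt_pow 13 t).const_mul (5:ℝ)).div_const 208)).add
        (((hasDerivAt_pow 17 t).const_mul (35:ℝ)).div_const 2176)).add
        (((hasDerivAt_pow 21 t).const_mul (3:ℝ)).div_const 256)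
      refine h.congr_deriv ?_
      push_cast
      ring
    rw [intervalIntegral.integral_eq_sub_of_hasDerivAt (fun t _ => hderiv t) hSint]
    norm_num
  -- the numeric inequality
  have hlow : (1.4142136 : ℝ) * r
      ≤ (r + r^5/10 + r^9/24 + 5*r^13/208 + 35*r^17/2176 + 3*r^21/256) * (1 + r^2) := by
    have hb : ∀ k : ℕ, (0.625623:ℝ)^k ≤ r^k := fun k =>
      pow_le_pow_left₀ (by norm_num) hr0 k
    have b2 : (0.391404138:ℝ) * r ≤ r ^ (2+1) :=
      auxmul8 r _ 2 hrp.le (le_trans (by norm_num) (hb 2))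
    have b4 : (0.153197199:ℝ) * r ≤ r ^ (4+1) :=
      auxmul8 r _ 4 hrp.le (le_trans (by norm_num) (hb 4))
    have b6 : (0.059962017:ℝ) * r ≤ r ^ (6+1) :=
      auxmul8 r _ 6 hrp.le (le_trans (by norm_num) (hb 6))
    have b8 : (0.023469381:ℝ) * r ≤ r ^ (8+1) :=
      auxmul8 r _ 8 hrp.le (le_trans (by norm_num) (hb 8))
    have b10 : (0.009186013:ℝ) * r ≤ r ^ (10+1) :=
      auxmul8 r _ 10 hrp.le (le_trans (by norm_num) (hb 10))
    have b12 : (0.003595443:ℝ) * r ≤ r ^ (12+1) :=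
      auxmul8 r _ 12 hrp.le (le_trans (by norm_num) (hb 12))
    have b14 : (0.001407271:ℝ) * r ≤ r ^ (14+1) :=
      auxmul8 r _ 14 hrp.le (le_trans (by norm_num) (hb 14))
    have b16 : (0.000550811:ℝ) * r ≤ r ^ (16+1) :=
      auxmul8 r _ 16 hrp.le (le_trans (by norm_num) (hb 16))
    have b18 : (0.00021559:ℝ) * r ≤ r ^ (18+1) :=
      auxmul8 r _ 18 hrp.le (le_trans (by norm_num) (hb 18))
    have b20 : (0.000084382:ℝ) * r ≤ r ^ (20+1) :=
      auxmul8 r _ 20 hrp.le (le_trans (by norm_num) (hb 20))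
    have b22 : (0.000033027:ℝ) * r ≤ r ^ (22+1) :=
      auxmul8 r _ 22 hrp.le (le_trans (by norm_num) (hb 22))
    nlinarith [b2, b4, b6, b8, b10, b12, b14, b16, b18, b20, b22]
  have hs2 : Real.sqrt 2 < 1.4142136 := by
    rw [show (1.4142136:ℝ) = Real.sqrt (1.4142136^2) by
      rw [Real.sqrt_sq (by norm_num)]]
    exact Real.sqrt_lt_sqrt (by norm_num) (by norm_num)
  have hden : (0:ℝ) < 1 + r ^ 2 := by positivity
  rw [div_lt_iff₀ hden]
  calc Real.sqrt 2 * r < 1.4142136 * r := by nlinarith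
    _ ≤ (r + r^5/10 + r^9/24 + 5*r^13/208 + 35*r^17/2176 + 3*r^21/256) * (1 + r^2) := hlow
    _ ≤ Bint r * (1 + r ^ 2) := by
        rw [← heval] at *
        nlinarith [hmono, hden]
end
end

section
/- Let C = ∫₀¹ dt/√(1+t⁴), f(z) = C^{-1} ∫₀^z dζ/√(1+ζ⁴) on the open unit disc D, A(r) = √(1+r⁴) − 1, and B(r) = ∫₀^r dt/√(1−t⁴). (i) For every z ∈ D with |z| ≤ r < 1, one has |f(z)| ≤ C^{-1}·B(r). (ii) If moreover 0 < a < 1 and r satisfy √2·C·a = B(r) and f(z) lies in the closed square [−a,a]², then |z − C·f(z)| ≤ A(r)·B(r). -/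
open Complex Set Real

noncomputable section

set_option maxHeartbeats 1000000

lemma usq {w : ℂ} (hw : ‖w‖ < 1) :
    ((1+w) ^ ((1:ℂ)/2)) * ((1+w) ^ ((1:ℂ)/2)) = 1 + w := by
  have h0 : (1:ℂ) + w ≠ 0 := by
    intro h
    have : ‖w‖ = 1 := by
      have : w = -1 := by linear_combination h
      simp [this]
    linarith
  rw [← Complex.cpow_add _ _ h0]
  norm_num

lemma u_re_nonneg {w : ℂ} (hw : ‖w‖ < 1) : 0 ≤ (((1+w) ^ ((1:ℂ)/2))).re := by
  have h0 : (1:ℂ) + w ≠ 0 := by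
    intro h
    have : ‖w‖ = 1 := by
      have : w = -1 := by linear_combination h
      simp [this]
    linarith
  rw [Complex.cpow_def_of_ne_zero h0]
  rw [Complex.exp_re]
  apply mul_nonneg (Real.exp_nonneg _)
  have him : (Complex.log (1+w) * ((1:ℂ)/2)).im = Complex.arg (1+w) / 2 := by
    simp [Complex.mul_im, Complex.log_im]
    ring
  rw [him]
  apply Real.cos_nonneg_of_mem_Icc
  constructor
  · have := Complex.neg_pi_lt_arg (1+w)
    have : -(Real.pi) ≤ (1+w).arg := le_of_lt this
    linarith
  · have := Complex.arg_le_pi (1+w)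
    linarith

lemma key0 {w : ℂ} {s : ℝ} (hws : ‖w‖ ≤ s) (hs : s < 1) :
    Real.sqrt (1-s) ≤ ‖(1+w) ^ ((1:ℂ)/2)‖ := by
  have hw : ‖w‖ < 1 := lt_of_le_of_lt hws hs
  set u := (1+w) ^ ((1:ℂ)/2) with hu
  have h1 : ‖u‖ * ‖u‖ = ‖(1:ℂ) + w‖ := by rw [← norm_mul, usq hw]
  have h2 : 1 - s ≤ ‖(1:ℂ)+w‖ := by
    have h := norm_sub_norm_le (1:ℂ) (-w)
    simp only [sub_neg_eq_add, norm_neg, norm_one] at h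
    linarith
  have h3 : Real.sqrt (1-s) ≤ Real.sqrt (‖u‖*‖u‖) := by
    apply Real.sqrt_le_sqrt; linarith
  rwa [Real.sqrt_mul_self (norm_nonneg u)] at h3

lemma u_re_ge {w : ℂ} {s : ℝ} (hws : ‖w‖ ≤ s) (hs : s < 1) :
    Real.sqrt (1-s) ≤ (((1+w) ^ ((1:ℂ)/2))).re := by
  have hw : ‖w‖ < 1 := lt_of_le_of_lt hws hs
  set u := (1+w) ^ ((1:ℂ)/2) with hu
  have h0 : 0 ≤ u.re := u_re_nonneg hw
  have h1 : (u*u).re = 1 + w.re := by rw [usq hw]; simp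
  have h2 : u.re * u.re - u.im * u.im = 1 + w.re := by
    rw [← h1]; simp [Complex.mul_re]
  have h3 : |w.re| ≤ s := le_trans (Complex.abs_re_le_norm w) hws
  have h4 : 1 - s ≤ u.re * u.re := by
    have := abs_le.mp h3
    nlinarith [sq_nonneg u.im]
  calc Real.sqrt (1-s) ≤ Real.sqrt (u.re * u.re) := Real.sqrt_le_sqrt (by linarith)
    _ = u.re := Real.sqrt_mul_self h0

lemma key1 {w : ℂ} {s : ℝ} (hws : ‖w‖ ≤ s) (hs : s < 1) (hs0 : 0 ≤ s) :
    ‖1 - ((1+w) ^ ((1:ℂ)/2))⁻¹‖ ≤ 1/Real.sqrt (1-s) - 1 := by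
  have hw : ‖w‖ < 1 := lt_of_le_of_lt hws hs
  set u := (1+w) ^ ((1:ℂ)/2) with hu
  set c := Real.sqrt (1-s) with hcd
  have hc : (0:ℝ) < c := Real.sqrt_pos.mpr (by linarith)
  have hnu : c ≤ ‖u‖ := key0 hws hs
  have hre : c ≤ u.re := u_re_ge hws hs
  have hune : u ≠ 0 := by
    intro h; rw [h] at hnu; simp at hnu; linarith
  have hx : ‖u - 1‖ * ‖u + 1‖ ≤ s := by
    rw [← norm_mul]
    have he : (u-1)*(u+1) = w := by linear_combination usq hw
    rw [he]; exact hws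
  have hup : 1 + c ≤ ‖u+1‖ := by
    have h5 : (u+1).re ≤ ‖u+1‖ := by
      exact Complex.re_le_norm _
    have h6 : (u+1).re = u.re + 1 := by simp
    linarith
  have h1 : ‖u - 1‖ ≤ s / (1 + c) := by
    rw [le_div_iff₀ (by linarith)]
    calc ‖u-1‖ * (1+c) ≤ ‖u-1‖ * ‖u+1‖ :=
          mul_le_mul_of_nonneg_left hup (norm_nonneg _)
      _ ≤ s := hx
  have hueq : (1:ℂ) - u⁻¹ = (u - 1) * u⁻¹ := by field_simp
  rw [hueq, norm_mul, norm_inv]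
  have h2 : ‖u - 1‖ * ‖u‖⁻¹ ≤ (s/(1+c)) * c⁻¹ := by
    apply mul_le_mul h1 _ (by positivity) (by positivity)
    exact inv_anti₀ hc hnu
  have h3 : s/(1+c) * c⁻¹ = 1/c - 1 := by
    have hc2 : c^2 = 1 - s := Real.sq_sqrt (by linarith)
    field_simp
    nlinarith [hc2]
  linarith [h2, h3.le, h3.ge]

lemma contOn {p q : ℝ} (h0 : 0 ≤ p) (hq : q < 1) :
    ContinuousOn (fun t : ℝ => 1 / Real.sqrt (1 - t ^ 4)) (Icc p q) := by
  apply ContinuousOn.div continuousOn_const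
  · exact (Real.continuous_sqrt.comp (by continuity)).continuousOn
  · intro t ht
    have h1 : 0 < 1 - t^4 := by
      rcases ht with ⟨h2, h3⟩
      have ht0 : 0 ≤ t := le_trans h0 h2
      have e1 : t^4 ≤ q^4 := pow_le_pow_left₀ ht0 h3 4
      have e2 : q^4 < 1 := pow_lt_one₀ (le_trans ht0 h3) hq (by norm_num)
      linarith
    exact ne_of_gt (Real.sqrt_pos.mpr h1)

lemma Bint_intble {p q : ℝ} (h0 : 0 ≤ p) (hpq : p ≤ q) (hq : q < 1) :
    IntervalIntegrable (fun t : ℝ => 1 / Real.sqrt (1 - t ^ 4)) MeasureTheory.volume p q := by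
  apply ContinuousOn.intervalIntegrable
  rw [uIcc_of_le hpq]
  exact contOn h0 hq

lemma Bint_nonneg {r : ℝ} (h : 0 ≤ r) : 0 ≤ Bint r := by
  apply intervalIntegral.integral_nonneg h
  intro t _; positivity

lemma Bint_le_poly {r : ℝ} (h0 : 0 ≤ r) (h1 : r ≤ 22/25) : Bint r ≤ r + r^5/5 := by
  have hr1 : r < 1 := by linarith
  have step : Bint r ≤ ∫ t in (0:ℝ)..r, (1 + t^4) := by
    apply intervalIntegral.integral_mono_on h0 (Bint_intble le_rfl h0 hr1)
    · exact (by continuity : Continuous fun t:ℝ => 1 + t^4).intervalIntegrable 0 r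
    · intro t ht
      rcases ht with ⟨ht0, htr⟩
      have h4 : t^4 ≤ (22/25)^4 := pow_le_pow_left₀ ht0 (le_trans htr h1) 4
      have hpos : 0 < 1 - t^4 := by nlinarith
      have hs : 1/(1+t^4) ≤ Real.sqrt (1-t^4) := by
        rw [show (1/(1+t^4)) = Real.sqrt ((1/(1+t^4))^2) from
          (Real.sqrt_sq (by positivity)).symm]
        apply Real.sqrt_le_sqrt
        rw [div_pow]
        rw [div_le_iff₀ (by positivity)]
        nlinarith [pow_nonneg ht0 4, pow_nonneg ht0 8]
      calc 1 / Real.sqrt (1-t^4) ≤ 1 / (1/(1+t^4)) := by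
            apply one_div_le_one_div_of_le (by positivity) hs
        _ = 1 + t^4 := by rw [one_div_one_div]
  have comp : (∫ t in (0:ℝ)..r, (1 + t^4)) = r + r^5/5 := by
    rw [intervalIntegral.integral_add intervalIntegrable_const
      ((continuous_pow 4).intervalIntegrable 0 r)]
    simp [integral_pow]
    ring
  rw [comp] at step
  exact step

lemma tail_bound {p q k : ℝ} (h0 : 0 ≤ p) (hpq : p ≤ q) (hq : q < 1)
    (hk : 0 < k) (hk2 : k ≤ (1+p)*(1+p^2)) :
    Bint q ≤ Bint p + (2/Real.sqrt k) * (Real.sqrt (1-p) - Real.sqrt (1-q)) := by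
  have hp1 : p < 1 := lt_of_le_of_lt hpq hq
  have hsk : 0 < Real.sqrt k := Real.sqrt_pos.mpr hk
  have hsplit : Bint q - Bint p = ∫ t in p..q, 1 / Real.sqrt (1 - t ^ 4) := by
    unfold Bint
    rw [intervalIntegral.integral_interval_sub_left (Bint_intble le_rfl (le_trans h0 hpq) hq)
      (Bint_intble le_rfl h0 hp1)]
  have hmono : (∫ t in p..q, 1 / Real.sqrt (1 - t ^ 4)) ≤
      ∫ t in p..q, 1 / Real.sqrt (k*(1-t)) := by
    apply intervalIntegral.integral_mono_on hpq (Bint_intble h0 hpq hq)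
    · apply ContinuousOn.intervalIntegrable
      rw [uIcc_of_le hpq]
      apply ContinuousOn.div continuousOn_const
      · exact (Real.continuous_sqrt.comp (by continuity)).continuousOn
      · intro t ht
        have : 0 < k*(1-t) := mul_pos hk (by rcases ht with ⟨_, h⟩; linarith [lt_of_le_of_lt h hq])
        exact ne_of_gt (Real.sqrt_pos.mpr this)
    · intro t ht
      rcases ht with ⟨htp, htq⟩
      have ht1 : t < 1 := lt_of_le_of_lt htq hq
      have hkt : 0 < k*(1-t) := mul_pos hk (by linarith)
      have ht0 : 0 ≤ t := le_trans h0 htp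
      have e2 : p^2 ≤ t^2 := pow_le_pow_left₀ h0 htp 2
      have e3 : p^3 ≤ t^3 := pow_le_pow_left₀ h0 htp 3
      have hkt2 : k ≤ (1+t)*(1+t^2) := by nlinarith
      have hle : k*(1-t) ≤ 1 - t^4 := by
        nlinarith [mul_nonneg (sub_nonneg.mpr ht1.le) (sub_nonneg.mpr hkt2)]
      apply one_div_le_one_div_of_le (Real.sqrt_pos.mpr hkt)
      exact Real.sqrt_le_sqrt hle
  have hftc : (∫ t in p..q, 1 / Real.sqrt (k*(1-t))) =
      (2/Real.sqrt k) * (Real.sqrt (1-p) - Real.sqrt (1-q)) := by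
    have hderiv : ∀ x ∈ uIcc p q, HasDerivAt (fun t => -(2/Real.sqrt k) * Real.sqrt (1-t))
        (1 / Real.sqrt (k*(1-x))) x := by
      intro x hx
      rw [uIcc_of_le hpq] at hx
      rcases hx with ⟨hxp, hxq⟩
      have hx1 : 0 < 1 - x := by linarith [lt_of_le_of_lt hxq hq]
      have hin : HasDerivAt (fun t:ℝ => 1 - t) (-1) x := by
        simpa using (hasDerivAt_id x).const_sub 1
      have hsq : HasDerivAt (fun t:ℝ => Real.sqrt (1-t))
          (1/(2*Real.sqrt (1-x)) * (-1)) x :=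
        (Real.hasDerivAt_sqrt (ne_of_gt hx1)).comp x hin
      have := hsq.const_mul (-(2/Real.sqrt k))
      refine this.congr_deriv ?_
      rw [Real.sqrt_mul hk.le]
      have h1 : 0 < Real.sqrt (1-x) := Real.sqrt_pos.mpr hx1
      field_simp
    rw [intervalIntegral.integral_eq_sub_of_hasDerivAt hderiv]
    · ring
    · apply ContinuousOn.intervalIntegrable
      rw [uIcc_of_le hpq]
      apply ContinuousOn.div continuousOn_const
      · exact (Real.continuous_sqrt.comp (by continuity)).continuousOn
      · intro t ht
        have : 0 < k*(1-t) := mul_pos hk (by rcases ht with ⟨_, h⟩; linarith [lt_of_le_of_lt h hq])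
        exact ne_of_gt (Real.sqrt_pos.mpr this)
  linarith [hmono, hftc.le, hftc.ge, hsplit.le, hsplit.ge]


lemma Bint_ge {r : ℝ} (h0 : 0 ≤ r) (h1 : r < 1) : r ≤ Bint r := by
  have step : (∫ _ in (0:ℝ)..r, (1:ℝ)) ≤ Bint r := by
    apply intervalIntegral.integral_mono_on h0 intervalIntegrable_const
      (Bint_intble le_rfl h0 h1)
    intro t ht
    have hpos : 0 < 1 - t^4 := by
      have e1 : t^4 ≤ r^4 := pow_le_pow_left₀ ht.1 ht.2 4
      have e2 : r^4 < 1 := pow_lt_one₀ h0 h1 (by norm_num)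
      linarith
    have hp : 0 < Real.sqrt (1 - t^4) := Real.sqrt_pos.mpr hpos
    rw [le_div_iff₀ hp, one_mul]
    exact Real.sqrt_le_one.mpr (by nlinarith [pow_nonneg ht.1 4])
  simpa using step

lemma sqrt_ub {x b : ℝ} (hb : 0 ≤ b) (h : x ≤ b^2) : Real.sqrt x ≤ b := by
  calc Real.sqrt x ≤ Real.sqrt (b^2) := Real.sqrt_le_sqrt h
    _ = b := Real.sqrt_sq hb

lemma sqrt_lb {x b : ℝ} (h : b^2 ≤ x) (hb : 0 ≤ b) : b ≤ Real.sqrt x := by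
  calc b = Real.sqrt (b^2) := (Real.sqrt_sq hb).symm
    _ ≤ Real.sqrt x := Real.sqrt_le_sqrt h

lemma main_real {r : ℝ} (h0 : 0 ≤ r) (h1 : r < 1) :
    (2 - Real.sqrt (1 + r^4)) * Bint r ≤ r := by
  -- common facts
  have hfac_pos : 0 < 2 - Real.sqrt (1 + r^4) := by
    have hr4 : r^4 ≤ 1 := le_of_lt (pow_lt_one₀ h0 h1 (by norm_num))
    have : Real.sqrt (1 + r^4) ≤ Real.sqrt 2 := Real.sqrt_le_sqrt (by linarith)
    have h2 : Real.sqrt 2 < 2 := by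
      have := Real.sq_sqrt (by norm_num : (2:ℝ) ≥ 0)
      nlinarith [Real.sqrt_nonneg 2]
    linarith
  rcases le_or_gt r (22/25) with hc | hc
  · -- small case: polynomial bound
    have hB := Bint_le_poly h0 hc
    have hBn := Bint_nonneg h0
    set s := Real.sqrt (1 + r^4) with hs
    have hs1 : 1 ≤ s := sqrt_lb (by nlinarith [pow_nonneg h0 4]) (by norm_num)
    have hs2 : s^2 = 1 + r^4 := Real.sq_sqrt (by positivity)
    have key : (2 - s) * (r + r^5/5) ≤ r := by
      nlinarith [mul_nonneg (mul_nonneg h0 (sub_nonneg.mpr hs1))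
        (by nlinarith : (0:ℝ) ≤ s^2 - s + 3)]
    calc (2-s) * Bint r ≤ (2-s) * (r + r^5/5) := by
          apply mul_le_mul_of_nonneg_left hB hfac_pos.le
      _ ≤ r := key
  · -- r > 22/25
    have hU0 : Bint (22/25) ≤ 48122382/48828125 := by
      have := Bint_le_poly (by norm_num) (le_refl (22/25 : ℝ))
      norm_num at this ⊢
      linarith
    -- sqrt numeric bounds
    have hsig0 : Real.sqrt (1 - 22/25) ≤ 347/1000 := sqrt_ub (by norm_num) (by norm_num)
    have hsk0 : (913/500 : ℝ) ≤ Real.sqrt ((1+22/25)*(1+(22/25)^2)) :=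
      sqrt_lb (by norm_num) (by norm_num)
    rcases le_or_gt r (19/20) with hc2 | hc2
    · -- middle case
      have hT := tail_bound (p := 22/25) (q := r) (k := (1+22/25)*(1+(22/25)^2))
        (by norm_num) hc.le h1 (by norm_num) le_rfl
      set s := Real.sqrt (1 - r) with hsdef
      have hs0 : 0 ≤ s := Real.sqrt_nonneg _
      have hslb : (223/1000 : ℝ) ≤ s := sqrt_lb (by nlinarith) (by norm_num)
      have hsub : s ≤ Real.sqrt (1 - 22/25) := Real.sqrt_le_sqrt (by linarith)
      have hsub2 : s ≤ 347/1000 := le_trans hsub hsig0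
      have hs2 : s^2 = 1 - r := Real.sq_sqrt (by linarith)
      -- bound Bint r
      have hks : 0 < Real.sqrt ((1+22/25)*(1+(22/25)^2)) := by positivity
      have hgap : (0:ℝ) ≤ Real.sqrt (1 - 22/25) - s := by linarith
      have hBr : Bint r ≤ 48122382/48828125 + (1000/913) * (347/1000 - s) := by
        have m1 : (2/Real.sqrt ((1+22/25)*(1+(22/25)^2))) ≤ 1000/913 := by
          rw [div_le_div_iff₀ hks (by norm_num)]
          linarith
        have m2 : (2/Real.sqrt ((1+22/25)*(1+(22/25)^2))) * (Real.sqrt (1 - 22/25) - s)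
            ≤ (1000/913) * (347/1000 - s) := by
          apply mul_le_mul m1 (by linarith) hgap (by norm_num)
        linarith
      -- factor bound
      have hd : 2 - Real.sqrt (1 + r^4) ≤ 92/125 := by
        have : (158/125 : ℝ) ≤ Real.sqrt (1 + r^4) := by
          apply sqrt_lb _ (by norm_num)
          have : (22/25:ℝ)^4 ≤ r^4 := pow_le_pow_left₀ (by norm_num) hc.le 4
          nlinarith
        linarith
      have hBn := Bint_nonneg h0
      have step : (2 - Real.sqrt (1 + r^4)) * Bint r
          ≤ (92/125) * (48122382/48828125 + (1000/913) * (347/1000 - s)) := by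
        calc (2 - Real.sqrt (1 + r^4)) * Bint r ≤ (92/125) * Bint r :=
              mul_le_mul_of_nonneg_right hd hBn
          _ ≤ _ := by
              apply mul_le_mul_of_nonneg_left hBr (by norm_num)
      refine le_trans step ?_
      nlinarith [hs2, mul_nonneg (sub_nonneg.mpr hslb) (sub_nonneg.mpr hsub2)]
    · -- top case
      have hU1 : Bint (19/20) ≤ 48122382/48828125 + 124/913 := by
        have hT := tail_bound (p := 22/25) (q := 19/20) (k := (1+22/25)*(1+(22/25)^2))
          (by norm_num) (by norm_num) (by norm_num) (by norm_num) le_rfl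
        have hks : 0 < Real.sqrt ((1+22/25)*(1+(22/25)^2)) := by positivity
        have htau : (223/1000:ℝ) ≤ Real.sqrt (1 - 19/20) := sqrt_lb (by norm_num) (by norm_num)
        have hgap : (0:ℝ) ≤ Real.sqrt (1-22/25) - Real.sqrt (1-19/20) :=
          sub_nonneg.mpr (Real.sqrt_le_sqrt (by norm_num))
        have m1 : (2/Real.sqrt ((1+22/25)*(1+(22/25)^2))) ≤ 1000/913 := by
          rw [div_le_div_iff₀ hks (by norm_num)]
          linarith
        have m2 : (2/Real.sqrt ((1+22/25)*(1+(22/25)^2))) * (Real.sqrt (1-22/25) - Real.sqrt (1-19/20))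
            ≤ (1000/913) * (347/1000 - 223/1000) := by
          apply mul_le_mul m1 (by linarith) hgap (by norm_num)
        have : (1000/913 : ℝ) * (347/1000 - 223/1000) = 124/913 := by norm_num
        linarith
      have hT := tail_bound (p := 19/20) (q := r) (k := (1+19/20)*(1+(19/20)^2))
        (by norm_num) hc2.le h1 (by norm_num) le_rfl
      set s := Real.sqrt (1 - r) with hsdef
      have hs0 : 0 ≤ s := Real.sqrt_nonneg _
      have hsig1 : Real.sqrt (1 - 19/20) ≤ 224/1000 := sqrt_ub (by norm_num) (by norm_num)
      have hsub : s ≤ Real.sqrt (1 - 19/20) := Real.sqrt_le_sqrt (by linarith)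
      have hsub2 : s ≤ 224/1000 := le_trans hsub hsig1
      have hs2 : s^2 = 1 - r := Real.sq_sqrt (by linarith)
      have hks : 0 < Real.sqrt ((1+19/20)*(1+(19/20)^2)) := by positivity
      have hsk1 : (963/500 : ℝ) ≤ Real.sqrt ((1+19/20)*(1+(19/20)^2)) :=
        sqrt_lb (by norm_num) (by norm_num)
      have hgap : (0:ℝ) ≤ Real.sqrt (1 - 19/20) - s := by linarith
      have hBr : Bint r ≤ 48122382/48828125 + 124/913 + (1000/963) * (224/1000 - s) := by
        have m1 : (2/Real.sqrt ((1+19/20)*(1+(19/20)^2))) ≤ 1000/963 := by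
          rw [div_le_div_iff₀ hks (by norm_num)]
          linarith
        have m2 : (2/Real.sqrt ((1+19/20)*(1+(19/20)^2))) * (Real.sqrt (1 - 19/20) - s)
            ≤ (1000/963) * (224/1000 - s) := by
          apply mul_le_mul m1 (by linarith) hgap (by norm_num)
        linarith
      have hd : 2 - Real.sqrt (1 + r^4) ≤ 653/1000 := by
        have : (1347/1000 : ℝ) ≤ Real.sqrt (1 + r^4) := by
          apply sqrt_lb _ (by norm_num)
          have : (19/20:ℝ)^4 ≤ r^4 := pow_le_pow_left₀ (by norm_num) hc2.le 4
          nlinarith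
        linarith
      have hBn := Bint_nonneg h0
      have step : (2 - Real.sqrt (1 + r^4)) * Bint r
          ≤ (653/1000) * (48122382/48828125 + 124/913 + (1000/963) * (224/1000 - s)) := by
        calc (2 - Real.sqrt (1 + r^4)) * Bint r ≤ (653/1000) * Bint r :=
              mul_le_mul_of_nonneg_right hd hBn
          _ ≤ _ := mul_le_mul_of_nonneg_left hBr (by norm_num)
      refine le_trans step ?_
      nlinarith [hs2, mul_nonneg hs0 (sub_nonneg.mpr hsub2)]

/-- (i) For `|z| ≤ r < 1` one has `|f(z)| ≤ C⁻¹·B(r)`; (ii) if moreover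
`√2·C·a = B(r)` and `f(z)` lies in the closed square `[-a,a]²`, then
`|z - C·f(z)| ≤ A(r)·B(r)`. -/
theorem stmt11 (r : ℝ) (z : ℂ) (hz : ‖z‖ < 1) (hzr : ‖z‖ ≤ r) (hr1 : r < 1) :
    ‖fSq z‖ ≤ Csq⁻¹ * Bint r ∧
    ∀ a : ℝ, 0 < a → a < 1 → Real.sqrt 2 * Csq * a = Bint r →
      |(fSq z).re| ≤ a → |(fSq z).im| ≤ a →
      ‖z - (Csq : ℂ) * fSq z‖ ≤ Aint r * Bint r := by
  have hr0 : 0 ≤ r := le_trans (norm_nonneg z) hzr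
  have hCpos : 0 < Csq := Csq_pos
  -- norm facts about w = (t z)^4
  have hwle : ∀ t : ℝ, t ∈ Icc (0:ℝ) 1 → ‖((t:ℂ)*z)^4‖ ≤ (r*t)^4 := by
    intro t ht
    rw [norm_pow, norm_mul, Complex.norm_real, Real.norm_eq_abs,
      _root_.abs_of_nonneg ht.1]
    have : t * ‖z‖ ≤ r * t := by nlinarith [ht.1, ht.2, norm_nonneg z]
    apply pow_le_pow_left₀ (mul_nonneg ht.1 (norm_nonneg z)) this
  have hslt : ∀ t : ℝ, t ∈ Icc (0:ℝ) 1 → (r*t)^4 < 1 := by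
    intro t ht
    have h1 : r * t < 1 := by nlinarith [ht.1, ht.2]
    have h2 : 0 ≤ r * t := mul_nonneg hr0 ht.1
    exact pow_lt_one₀ h2 h1 (by norm_num)
  have hs0 : ∀ t : ℝ, t ∈ Icc (0:ℝ) 1 → (0:ℝ) ≤ (r*t)^4 := by
    intro t ht; exact pow_nonneg (mul_nonneg hr0 ht.1) 4
  -- integrability of complex integrand
  have hint : IntervalIntegrable
      (fun t : ℝ => z / ((1 + ((t : ℂ) * z) ^ 4) ^ ((1 : ℂ)/2))) MeasureTheory.volume 0 1 := by
    apply ContinuousOn.intervalIntegrable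
    rw [uIcc_of_le (by norm_num : (0:ℝ) ≤ 1)]
    apply ContinuousOn.div continuousOn_const
    · apply ContinuousOn.cpow _ continuousOn_const
      · intro t ht
        apply Complex.mem_slitPlane_of_norm_lt_one
        exact lt_of_le_of_lt (hwle t ht) (hslt t ht)
      · exact (by continuity : Continuous fun t : ℝ => 1 + ((t:ℂ)*z)^4).continuousOn
    · intro t ht
      have := key0 (hwle t ht) (hslt t ht)
      have hp : 0 < Real.sqrt (1 - (r*t)^4) := Real.sqrt_pos.mpr (by linarith [hslt t ht])
      intro h
      rw [h] at this
      simp at this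
      linarith
  -- the real bound function and substitution
  have hgcont : ContinuousOn (fun t : ℝ => r * (1/Real.sqrt (1-(r*t)^4))) (Icc 0 1) := by
    apply ContinuousOn.mul continuousOn_const
    apply ContinuousOn.div continuousOn_const
    · exact (Real.continuous_sqrt.comp (by continuity)).continuousOn
    · intro t ht
      exact ne_of_gt (Real.sqrt_pos.mpr (by linarith [hslt t ht]))
  have hgint : IntervalIntegrable (fun t : ℝ => r * (1/Real.sqrt (1-(r*t)^4)))
      MeasureTheory.volume 0 1 := by
    apply ContinuousOn.intervalIntegrable
    rwa [uIcc_of_le (by norm_num : (0:ℝ) ≤ 1)]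
  have hsubst : (∫ t in (0:ℝ)..1, r * (1/Real.sqrt (1-(r*t)^4))) = Bint r := by
    rw [intervalIntegral.integral_const_mul]
    have h := intervalIntegral.smul_integral_comp_mul_left
      (f := fun u : ℝ => 1/Real.sqrt (1-u^4)) (a := (0:ℝ)) (b := 1) r
    simp only [mul_zero, mul_one, smul_eq_mul] at h
    rw [h]; rfl
  -- part (i)
  have hI : ‖∫ t in (0:ℝ)..1, z / ((1 + ((t : ℂ) * z) ^ 4) ^ ((1 : ℂ)/2))‖ ≤ Bint r := by
    have habs : |∫ t in (0:ℝ)..1, r * (1/Real.sqrt (1-(r*t)^4))| = Bint r := by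
      rw [hsubst]; exact _root_.abs_of_nonneg (Bint_nonneg hr0)
    rw [← habs]
    apply intervalIntegral.norm_integral_le_abs_of_norm_le _ hgint
    filter_upwards [MeasureTheory.ae_restrict_mem measurableSet_uIoc] with t ht
    rw [uIoc_of_le (by norm_num : (0:ℝ) ≤ 1)] at ht
    have htI : t ∈ Icc (0:ℝ) 1 := ⟨ht.1.le, ht.2⟩
    rw [norm_div]
    have hp : 0 < Real.sqrt (1 - (r*t)^4) := Real.sqrt_pos.mpr (by linarith [hslt t htI])
    rw [mul_one_div]
    exact div_le_div₀ hr0 hzr hp (key0 (hwle t htI) (hslt t htI))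
  constructor
  · rw [fSq, norm_mul, norm_inv, Complex.norm_real, Real.norm_eq_abs,
      abs_of_pos hCpos]
    exact mul_le_mul_of_nonneg_left hI (by positivity)
  · intro a _ _ _ _ _
    have hCne : (Csq:ℂ) ≠ 0 := by
      simp only [ne_eq, Complex.ofReal_eq_zero]
      exact ne_of_gt hCpos
    have hCf : (Csq:ℂ) * fSq z = ∫ t in (0:ℝ)..1, z / ((1 + ((t : ℂ) * z) ^ 4) ^ ((1 : ℂ)/2)) := by
      rw [fSq, ← mul_assoc, mul_inv_cancel₀ hCne, one_mul]
    have hzconst : (∫ _ in (0:ℝ)..1, z) = z := by simp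
    have hdiff : z - (Csq:ℂ) * fSq z =
        ∫ t in (0:ℝ)..1, (z - z / ((1 + ((t : ℂ) * z) ^ 4) ^ ((1 : ℂ)/2))) := by
      rw [intervalIntegral.integral_sub intervalIntegrable_const hint, hzconst, hCf]
    -- bound function for part ii
    have hg2int : IntervalIntegrable (fun t : ℝ => r * (1/Real.sqrt (1-(r*t)^4)) - r)
        MeasureTheory.volume 0 1 := hgint.sub intervalIntegrable_const
    have hg2val : (∫ t in (0:ℝ)..1, (r * (1/Real.sqrt (1-(r*t)^4)) - r)) = Bint r - r := by
      rw [intervalIntegral.integral_sub hgint intervalIntegrable_const, hsubst]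
      simp
    have hbound : ‖z - (Csq:ℂ) * fSq z‖ ≤ Bint r - r := by
      have habs2 : |∫ t in (0:ℝ)..1, (r * (1/Real.sqrt (1-(r*t)^4)) - r)| = Bint r - r := by
        rw [hg2val]
        exact _root_.abs_of_nonneg (by linarith [Bint_ge hr0 hr1])
      rw [hdiff, ← habs2]
      apply intervalIntegral.norm_integral_le_abs_of_norm_le _ hg2int
      filter_upwards [MeasureTheory.ae_restrict_mem measurableSet_uIoc] with t ht
      rw [uIoc_of_le (by norm_num : (0:ℝ) ≤ 1)] at ht
      have htI : t ∈ Icc (0:ℝ) 1 := ⟨ht.1.le, ht.2⟩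
      have hfac : z - z / ((1 + ((t : ℂ) * z) ^ 4) ^ ((1 : ℂ)/2)) =
          z * (1 - (((1 + ((t : ℂ) * z) ^ 4) ^ ((1 : ℂ)/2)))⁻¹) := by
        rw [div_eq_mul_inv]; ring
      rw [hfac, norm_mul]
      have hk1 := key1 (hwle t htI) (hslt t htI) (hs0 t htI)
      have hp : 0 < Real.sqrt (1 - (r*t)^4) := Real.sqrt_pos.mpr (by linarith [hslt t htI])
      have hp1 : Real.sqrt (1 - (r*t)^4) ≤ 1 :=
        Real.sqrt_le_one.mpr (by linarith [hs0 t htI])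
      have hnn : (0:ℝ) ≤ 1/Real.sqrt (1-(r*t)^4) - 1 := by
        rw [le_sub_iff_add_le, zero_add, le_div_iff₀ hp, one_mul]
        exact hp1
      calc ‖z‖ * ‖1 - (((1 + ((t : ℂ) * z) ^ 4) ^ ((1 : ℂ)/2)))⁻¹‖
          ≤ r * (1/Real.sqrt (1-(r*t)^4) - 1) :=
            mul_le_mul hzr hk1 (norm_nonneg _) hr0
        _ = r * (1/Real.sqrt (1-(r*t)^4)) - r := by ring
    have hm := main_real hr0 hr1
    have hBn := Bint_nonneg hr0
    unfold Aint
    nlinarith [hm]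
end
end

section
/- Let C = ∫₀¹ dt/√(1+t⁴), A(r) = √(1+r⁴) − 1, B(r) = ∫₀^r dt/√(1−t⁴), Φ(r) = A(r) + 2A(r)·B(r)² + A(r)²·B(r)², and r₀ = 0.625623. Let a > 0, let u₁, u₂ ∈ [−a,a] satisfy |u₁ + u₂| ≤ a² + u₁u₂, let α, β > 0 be such that (u₁ − u₂)² ≤ α·(a² − u₁u₂) and a² − u₁u₂ ≥ β·a², and let 0 < r ≤ r₀. If Φ(r) ≤ (C² − α·(1 + A(r₀))/8)·(a² − u₁u₂), then (1 + A(r))·√(1 + (u₁ − u₂)²/4) ≤ √((1 + C²·(a² − u₁u₂))² + C⁴·a²·(u₁ + u₂)²) − 2A(r)·B(r)² − A(r)²·B(r)². -/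
open Complex Set Real

noncomputable section

/-- Lemma 7 of the paper (with `Φ(r) = A(r) + 2A(r)B(r)² + A(r)²B(r)²`):
the sufficient condition `Φ(r) ≤ (C² - α(1+A(r₀))/8)(a² - u₁u₂)` implies the key
inequality (12). -/
theorem stmt13 (a u₁ u₂ α β r : ℝ)
    (ha : 0 < a) (h₁ : u₁ ∈ Icc (-a) a) (h₂ : u₂ ∈ Icc (-a) a)
    (h : |u₁ + u₂| ≤ a ^ 2 + u₁ * u₂)
    (hα : 0 < α) (hβ : 0 < β)
    (hab1 : (u₁ - u₂) ^ 2 ≤ α * (a ^ 2 - u₁ * u₂))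
    (hab2 : β * a ^ 2 ≤ a ^ 2 - u₁ * u₂)
    (hrpos : 0 < r) (hrr0 : r ≤ 0.625623)
    (hΦ : Aint r + 2 * Aint r * Bint r ^ 2 + Aint r ^ 2 * Bint r ^ 2 ≤
      (Csq ^ 2 - α * (1 + Aint 0.625623) / 8) * (a ^ 2 - u₁ * u₂)) :
    (1 + Aint r) * Real.sqrt (1 + (u₁ - u₂) ^ 2 / 4) ≤
      Real.sqrt ((1 + Csq ^ 2 * (a ^ 2 - u₁ * u₂)) ^ 2
          + Csq ^ 4 * a ^ 2 * (u₁ + u₂) ^ 2)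
        - 2 * Aint r * Bint r ^ 2 - Aint r ^ 2 * Bint r ^ 2 := by
  have hA0 : 0 ≤ Aint r := by
    have hs := Real.sq_sqrt (show (0:ℝ) ≤ 1 + r ^ 4 by positivity)
    have hn := Real.sqrt_nonneg (1 + r ^ 4)
    simp only [Aint]
    nlinarith [pow_nonneg hrpos.le 4]
  have hAmono : Aint r ≤ Aint 0.625623 := by
    simp only [Aint]
    have : r ^ 4 ≤ (0.625623:ℝ) ^ 4 := by
      exact pow_le_pow_left₀ hrpos.le hrr0 4
    gcongr
  have hA0' : 0 ≤ Aint 0.625623 := le_trans hA0 hAmono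
  have hB2 : 0 ≤ Bint r ^ 2 := sq_nonneg _
  have hD : 0 < a ^ 2 - u₁ * u₂ := lt_of_lt_of_le (by positivity) hab2
  have hx : 0 ≤ (u₁ - u₂) ^ 2 := sq_nonneg _
  have h1 : Real.sqrt (1 + (u₁ - u₂) ^ 2 / 4) ≤ 1 + (u₁ - u₂) ^ 2 / 8 := by
    have := Real.sqrt_le_sqrt (show 1 + (u₁ - u₂) ^ 2 / 4 ≤ (1 + (u₁ - u₂) ^ 2 / 8) ^ 2 by
      nlinarith [sq_nonneg ((u₁ - u₂) ^ 2)])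
    rwa [Real.sqrt_sq (by positivity)] at this
  have h2 : 1 + Csq ^ 2 * (a ^ 2 - u₁ * u₂) ≤
      Real.sqrt ((1 + Csq ^ 2 * (a ^ 2 - u₁ * u₂)) ^ 2 + Csq ^ 4 * a ^ 2 * (u₁ + u₂) ^ 2) := by
    have := Real.sqrt_le_sqrt (show (1 + Csq ^ 2 * (a ^ 2 - u₁ * u₂)) ^ 2 ≤
        (1 + Csq ^ 2 * (a ^ 2 - u₁ * u₂)) ^ 2 + Csq ^ 4 * a ^ 2 * (u₁ + u₂) ^ 2 from
      le_add_of_nonneg_right (by positivity))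
    rwa [Real.sqrt_sq (by positivity)] at this
  have h3 : (1 + Aint r) * Real.sqrt (1 + (u₁ - u₂) ^ 2 / 4) ≤
      (1 + Aint r) * (1 + (u₁ - u₂) ^ 2 / 8) := by
    apply mul_le_mul_of_nonneg_left h1 (by linarith)
  have h4 : (1 + Aint r) * (u₁ - u₂) ^ 2 ≤ (1 + Aint 0.625623) * (α * (a ^ 2 - u₁ * u₂)) := by
    apply mul_le_mul (by linarith) hab1 hx (by linarith)
  nlinarith [h3, h4, hΦ, h2]
end
end

section
/- The complete elliptic integral of the first kind at modulus √2/2 equals twice the integral ∫₀¹ dt/√(1+t⁴); that is, ∫₀^{π/2} dθ/√(1 − (1/2)·sin²θ) = 2·∫₀¹ dt/√(1+t⁴) = 1.854074677… . -/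
open Complex Set Real

noncomputable section

/-- `K(√2/2) = 2·∫₀¹ dt/√(1+t⁴)`: the complete elliptic integral of the first kind
at modulus `√2/2` equals twice the constant `C`. -/
theorem stmt19 :
    ∫ θ in (0:ℝ)..(Real.pi / 2), 1 / Real.sqrt (1 - (1/2) * Real.sin θ ^ 2) =
      2 * ∫ t in (0:ℝ)..1, 1 / Real.sqrt (1 + t ^ 4) := by
  have hsub := intervalIntegral.integral_comp_smul_deriv
    (f := fun t : ℝ => 2 * Real.arctan t) (f' := fun t : ℝ => 2 / (1 + t ^ 2))
    (g := fun θ : ℝ => 1 / Real.sqrt (1 - (1/2) * Real.sin θ ^ 2))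
    (a := 0) (b := 1)
    (fun x _ => by
      have := (Real.hasDerivAt_arctan x).const_mul (2:ℝ)
      simpa [div_eq_mul_inv, mul_comm] using this)
    ((continuous_const.div (continuous_const.add (continuous_pow 2)) (fun y => (show (0:ℝ) < 1 + y ^ 2 by positivity).ne')).continuousOn)
    (by
      apply Continuous.div continuous_const
      · exact (Real.continuous_sqrt.comp (by fun_prop))
      · intro θ
        have h1 : Real.sin θ ^ 2 ≤ 1 := Real.sin_sq_le_one θ
        have : (0:ℝ) < 1 - (1/2) * Real.sin θ ^ 2 := by nlinarith
        positivity)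
  have h01 : (fun t : ℝ => 2 * Real.arctan t) 0 = 0 := by simp
  have h11 : (fun t : ℝ => 2 * Real.arctan t) 1 = Real.pi / 2 := by
    simp [Real.arctan_one]; ring
  rw [show (2:ℝ) * Real.arctan 0 = 0 from h01, show (2:ℝ) * Real.arctan 1 = Real.pi / 2 from h11] at hsub
  rw [← hsub]
  rw [← intervalIntegral.integral_const_mul]
  apply intervalIntegral.integral_congr
  intro t _
  simp only [Function.comp, smul_eq_mul]
  have h1 : (0:ℝ) < 1 + t ^ 2 := by positivity
  have hs : Real.sin (2 * Real.arctan t) = 2 * t / (1 + t ^ 2) := by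
    rw [Real.sin_two_mul, Real.sin_arctan, Real.cos_arctan]
    rw [mul_assoc, div_mul_div_comm, ← Real.sqrt_mul (by positivity : (0:ℝ) ≤ 1 + t ^ 2),
      Real.sqrt_mul_self (by positivity : (0:ℝ) ≤ 1 + t ^ 2)]
    ring
  have hval : 1 - (1/2) * Real.sin (2 * Real.arctan t) ^ 2 = (1 + t ^ 4) / (1 + t ^ 2) ^ 2 := by
    rw [hs]; field_simp; ring
  have hsq : Real.sqrt ((1 + t ^ 4) / (1 + t ^ 2) ^ 2) = Real.sqrt (1 + t ^ 4) / (1 + t ^ 2) := by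
    rw [Real.sqrt_div (by positivity : (0:ℝ) ≤ 1 + t ^ 4), Real.sqrt_sq h1.le]
  have hpos : (0:ℝ) < Real.sqrt (1 + t ^ 4) := Real.sqrt_pos.mpr (by positivity)
  rw [hval, hsq]
  field_simp
end
end
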